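/- arXiv:1911.03445 — 15 statements merged into one kernel-verified Lean document; each statement's English description precedes it below -/
import Mathlib

section
/- Let k1, k−1, k2, e0, s0 be positive reals and set K_M = (k−1+k2)/k1, ε_SS = e0/(K_M+s0), t_C = 1/(k1(s0+K_M)) and t_D = (K_M+s0)/(k2·e0). Then t_C/t_D = ε_SS / ((1 + k−1/k2)(1 + s0/K_M)), and consequently t_C/t_D ≤ ε_SS. -/
/-! Since `k₁ K_M = k₋₁ + k₂`, the factor `(1 + k₋₁/k₂)(1 + s₀/K_M)` collapses to
`k₁ (s₀ + K_M) / k₂ = 1 / (k₂ t_C)`, so `t_C / t_D = ε_SS · k₂ t_C` is the claimed identity.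
Both factors are at least `1`, which gives the bound. -/

theorem one_add_div_mul_one_add_div_eq {k1 km1 k2 s0 KM : ℝ}
    (hk1 : k1 ≠ 0) (hk2 : k2 ≠ 0) (hKM_ne : KM ≠ 0) (hKM : KM = (km1 + k2) / k1) :
    (1 + km1 / k2) * (1 + s0 / KM) = k1 * (s0 + KM) / k2 := by
  have hKM_mul : KM * k1 = km1 + k2 := by rw [hKM, div_mul_cancel₀ _ hk1]
  field_simp
  linear_combination -(s0 + KM) * hKM_mul

/-- ratio of fast to slow timescales in the Michaelis-Menten mechanism. -/
theorem timescale_ratio (k1 km1 k2 e0 s0 KM εSS tC tD : ℝ)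
    (hk1 : 0 < k1) (hkm1 : 0 < km1) (hk2 : 0 < k2) (he0 : 0 < e0) (hs0 : 0 < s0)
    (hKM : KM = (km1 + k2) / k1)
    (hεSS : εSS = e0 / (KM + s0))
    (htC : tC = 1 / (k1 * (s0 + KM)))
    (htD : tD = (KM + s0) / (k2 * e0)) :
    tC / tD = εSS / ((1 + km1 / k2) * (1 + s0 / KM)) ∧ tC / tD ≤ εSS := by
  have hKM_pos : 0 < KM := hKM ▸ by positivity
  have ratio_eq : tC / tD = εSS / ((1 + km1 / k2) * (1 + s0 / KM)) := by
    rw [one_add_div_mul_one_add_div_eq hk1.ne' hk2.ne' hKM_pos.ne' hKM, hεSS, htC, htD]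
    field_simp
  have one_le_factor : 1 ≤ (1 + km1 / k2) * (1 + s0 / KM) :=
    one_le_mul_of_one_le_of_one_le (le_add_of_nonneg_right (by positivity))
      (le_add_of_nonneg_right (by positivity))
  exact ⟨ratio_eq, ratio_eq ▸ div_le_self (hεSS ▸ by positivity) one_le_factor⟩
end

section
/- Let s, p : [0,∞) → ℝ be differentiable and satisfy s' = −k1(e0 − (s0 − s − p))s + k−1(s0 − s − p) and p' = k2(s0 − s − p), with s(0) = s0 and p(0) = 0, where k1, k−1, k2, e0, s0 > 0 and K_M = (k−1+k2)/k1. Assume 0 ≤ s(t) ≤ s0 for all t ≥ 0. Then, with E(t) = s0 − s(t) − p(t) and η = e0/K_M, one has E(t)² ≤ s0²·η²·(1 − exp(−k1·K_M·t)) for all t ≥ 0; in particular |E(t)| ≤ s0·η for all t ≥ 0. -/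
/-!
Writing `λ = k1 K_M = k₋₁ + k2` and `e0 = K_M η`, the deviation obeys
`E' = k1 (K_M η - E) s - λ E`. Since `0 ≤ s ≤ s0`, completing the square gives
`(E²)' ≤ λ (s0² η² - E²)`, to which Grönwall's inequality applies since `E(0) = 0`.
-/

open Real

theorem gronwallBound_zero_neg_mul (r M x : ℝ) :
    gronwallBound 0 (-r) (r * M) x = M * (1 - exp (-(r * x))) := by
  rcases eq_or_ne r 0 with rfl | hr
  · simp [gronwallBound_K0]
  · rw [gronwallBound_of_K_ne_0 (neg_ne_zero.2 hr)]
    field_simp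
    ring_nf

theorem le_mul_one_sub_exp_of_hasDerivAt_le {f f' : ℝ → ℝ} {r M t : ℝ}
    (hf : ∀ u, 0 ≤ u → HasDerivAt f (f' u) u) (h0 : f 0 ≤ 0)
    (hle : ∀ u, 0 ≤ u → f' u ≤ r * (M - f u)) (ht : 0 ≤ t) :
    f t ≤ M * (1 - exp (-(r * t))) := by
  have h := le_gronwallBound_of_liminf_deriv_right_le (b := t) (K := -r) (ε := r * M)
    (fun u hu => (hf u hu.1).continuousAt.continuousWithinAt)
    (fun u hu _ hlt => (hf u hu.1).hasDerivWithinAt.liminf_right_slope_le hlt) h0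
    (fun u hu => by linarith [hle u hu.1]) t ⟨ht, le_rfl⟩
  rwa [sub_zero, gronwallBound_zero_neg_mul] at h

theorem hasDerivAt_michaelisMenten_deviation {k1 km1 k2 e0 s0 t : ℝ} {s p : ℝ → ℝ}
    (hs : HasDerivAt s (-k1 * (e0 - (s0 - s t - p t)) * s t + km1 * (s0 - s t - p t)) t)
    (hp : HasDerivAt p (k2 * (s0 - s t - p t)) t) :
    HasDerivAt (fun u => s0 - s u - p u)
      (k1 * (e0 - (s0 - s t - p t)) * s t - (km1 + k2) * (s0 - s t - p t)) t :=
  ((hs.const_sub s0).sub hp).congr_deriv (by ring)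

theorem two_mul_michaelisMenten_deviation_rate_le {k1 KM η s0 σ E : ℝ} (hk1 : 0 ≤ k1)
    (hKM : 0 ≤ KM) (hσ : 0 ≤ σ) (hσs0 : σ ≤ s0) :
    2 * E * (k1 * (KM * η - E) * σ - k1 * KM * E) ≤ k1 * KM * (s0 ^ 2 * η ^ 2 - E ^ 2) := by
  have hsq : 0 ≤ (σ * η - E) ^ 2 + (s0 ^ 2 - σ ^ 2) * η ^ 2 := by
    have : σ ^ 2 ≤ s0 ^ 2 := pow_le_pow_left₀ hσ hσs0 2
    positivity
  nlinarith [mul_nonneg (mul_nonneg hk1 hKM) hsq, mul_nonneg (mul_nonneg hk1 hσ) (sq_nonneg E)]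

theorem sQSSA_energy_bound_general (k1 km1 k2 e0 s0 KM η : ℝ)
    (hk1 : 0 < k1) (hkm1 : 0 < km1) (hk2 : 0 < k2) (he0 : 0 < e0)
    (hKM : KM = (km1 + k2) / k1) (hη : η = e0 / KM)
    (s p : ℝ → ℝ)
    (hs : ∀ t : ℝ, 0 ≤ t →
      HasDerivAt s (-k1 * (e0 - (s0 - s t - p t)) * s t + km1 * (s0 - s t - p t)) t)
    (hp : ∀ t : ℝ, 0 ≤ t → HasDerivAt p (k2 * (s0 - s t - p t)) t)
    (hs0' : s 0 = s0) (hp0 : p 0 = 0)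
    (hbound : ∀ t : ℝ, 0 ≤ t → 0 ≤ s t ∧ s t ≤ s0) :
    ∀ t : ℝ, 0 ≤ t →
      (s0 - s t - p t) ^ 2 ≤ s0 ^ 2 * η ^ 2 * (1 - Real.exp (-(k1 * KM * t))) ∧
      |s0 - s t - p t| ≤ s0 * η := by
  intro t ht
  have hKMpos : 0 < KM := by rw [hKM]; positivity
  have hrate : k1 * KM = km1 + k2 := by rw [hKM]; field_simp
  have he0η : e0 = KM * η := by rw [hη]; field_simp
  have energy : (s0 - s t - p t) ^ 2 ≤ s0 ^ 2 * η ^ 2 * (1 - exp (-(k1 * KM * t))) := by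
    refine le_mul_one_sub_exp_of_hasDerivAt_le
      (fun u hu => (hasDerivAt_michaelisMenten_deviation (hs u hu) (hp u hu)).fun_pow 2)
      (by simp [hs0', hp0]) (fun u hu => ?_) ht
    obtain ⟨hσ, hσs0⟩ := hbound u hu
    have := two_mul_michaelisMenten_deviation_rate_le (η := η) (E := s0 - s u - p u)
      hk1.le hKMpos.le hσ hσs0
    rw [← hrate, he0η]
    simp only [Nat.cast_ofNat, pow_one, Nat.add_one_sub_one]
    linarith
  have hs0 : 0 ≤ s0 := (hbound t ht).1.trans (hbound t ht).2
  have hηpos : 0 < η := by rw [hη]; positivity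
  refine ⟨energy, abs_le_of_sq_le_sq ?_ (by positivity)⟩
  calc (s0 - s t - p t) ^ 2 ≤ s0 ^ 2 * η ^ 2 * (1 - exp (-(k1 * KM * t))) := energy
    _ ≤ s0 ^ 2 * η ^ 2 :=
      mul_le_of_le_one_right (by positivity) (by linarith [exp_pos (-(k1 * KM * t))])
    _ = (s0 * η) ^ 2 := by ring

/-- energy bound on the deviation from the critical manifold s + p = s0
of the standard QSSA. -/
theorem sQSSA_energy_bound (k1 km1 k2 e0 s0 KM η : ℝ)
    (hk1 : 0 < k1) (hkm1 : 0 < km1) (hk2 : 0 < k2) (he0 : 0 < e0) (hs0 : 0 < s0)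
    (hKM : KM = (km1 + k2) / k1) (hη : η = e0 / KM)
    (s p : ℝ → ℝ)
    (hs : ∀ t : ℝ, 0 ≤ t →
      HasDerivAt s (-k1 * (e0 - (s0 - s t - p t)) * s t + km1 * (s0 - s t - p t)) t)
    (hp : ∀ t : ℝ, 0 ≤ t → HasDerivAt p (k2 * (s0 - s t - p t)) t)
    (hs0' : s 0 = s0) (hp0 : p 0 = 0)
    (hbound : ∀ t : ℝ, 0 ≤ t → 0 ≤ s t ∧ s t ≤ s0) :
    ∀ t : ℝ, 0 ≤ t →
      (s0 - s t - p t) ^ 2 ≤ s0 ^ 2 * η ^ 2 * (1 - Real.exp (-(k1 * KM * t))) ∧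
      |s0 - s t - p t| ≤ s0 * η :=
  sQSSA_energy_bound_general k1 km1 k2 e0 s0 KM η hk1 hkm1 hk2 he0 hKM hη s p hs hp hs0' hp0 hbound
end

section
/- Let c, p : [0,∞) → ℝ be differentiable and satisfy c' = k1(e0 − c)(s0 − c − p) − k1·K_M·c and p' = k2·c, with c(0) = 0 and p(0) = 0, where k1, k−1, k2, e0, s0 > 0 and K_M = (k−1+k2)/k1. Assume 0 ≤ c(t) ≤ min(λ, e0) and 0 ≤ p(t) ≤ s0 for all t ≥ 0, where λ = ½(e0+K_M+s0) − ½√((e0+K_M+s0)² − 4e0·s0). Then the error E_c(t) = c(t) − e0(s0 − p(t))/(K_M + s0 − p(t)) satisfies |E_c(t)| ≤ |E_c(0)|·exp(−k1·K_M·t/2) + (1/(k1·K_M))·(k1·e0²/4 + e0·k2·λ/K_M) for all t ≥ 0. -/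
/-!
Write `g(p) = e0 (s0 - p) / (KM + s0 - p)` and `E = c - g(p)`. Since `g(p)` is a root of the
complex rate viewed as a quadratic in `c`, the rate factors as `-a E + R` with
`a = k1 (e0 + KM + s0 - c - g - p)` and `R = k1 g (g - e0)`; the chain rule adds
`e0 KM k2 c / (KM + s0 - p)²` to `R`. The substrate `s0 - c - p` stays nonnegative (integrating
factor), which together with `g ≤ e0` gives `a ≥ k1 KM`, and `|R| ≤ k1 e0² / 4 + e0 k2 λ / KM`.
Grönwall's inequality for `E²`, after AM-GM on the cross term, yields the bound.
-/

open Real Set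

section LinearDifferentialInequalities

variable {y A a b E R : ℝ → ℝ}

theorem nonneg_of_hasDerivAt_eq_mul_add (hA : ∀ t, 0 ≤ t → HasDerivAt A (a t) t)
    (hy : ∀ t, 0 ≤ t → HasDerivAt y (a t * y t + b t) t) (hb : ∀ t, 0 ≤ t → 0 ≤ b t)
    (hy0 : 0 ≤ y 0) {t : ℝ} (ht : 0 ≤ t) : 0 ≤ y t := by
  have hz : ∀ u, 0 ≤ u → HasDerivAt (fun v => y v * exp (-A v)) (b u * exp (-A u)) u :=
    fun u hu => ((hy u hu).mul (hA u hu).fun_neg.exp).congr_deriv (by ring)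
  have hmono : MonotoneOn (fun v => y v * exp (-A v)) (Ici 0) :=
    monotoneOn_of_hasDerivWithinAt_nonneg (convex_Ici 0)
      (fun u hu => (hz u hu).continuousAt.continuousWithinAt)
      (fun u hu => (hz u (interior_subset hu)).hasDerivWithinAt)
      (fun u hu => mul_nonneg (hb u (interior_subset hu)) (exp_pos _).le)
  have hz0 : 0 ≤ y 0 * exp (-A 0) := mul_nonneg hy0 (exp_pos _).le
  exact (mul_nonneg_iff_of_pos_right (exp_pos _)).1 (hz0.trans (hmono self_mem_Ici ht ht))

theorem sq_le_gronwallBound_of_hasDerivAt_eq_neg_mul_add {α r : ℝ} (hα : 0 < α)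
    (hE : ∀ t, 0 ≤ t → HasDerivAt E (-a t * E t + R t) t) (ha : ∀ t, 0 ≤ t → α ≤ a t)
    (hR : ∀ t, 0 ≤ t → |R t| ≤ r) {t : ℝ} (ht : 0 ≤ t) :
    E t ^ 2 ≤ gronwallBound (E 0 ^ 2) (-α) (r ^ 2 / α) t := by
  have hE2 : ∀ u, 0 ≤ u → HasDerivAt (fun v => E v ^ 2) (2 * E u * (-a u * E u + R u)) u := by
    intro u hu
    simpa using (hE u hu).fun_pow 2
  have hbound : ∀ u, 0 ≤ u → 2 * E u * (-a u * E u + R u) ≤ -α * E u ^ 2 + r ^ 2 / α := by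
    intro u hu
    have hER : E u * R u ≤ |E u| * r := by
      calc E u * R u ≤ |E u| * |R u| := by rw [← abs_mul]; exact le_abs_self _
        _ ≤ |E u| * r := mul_le_mul_of_nonneg_left (hR u hu) (abs_nonneg _)
    have hamgm : 2 * (|E u| * r) ≤ α * E u ^ 2 + r ^ 2 / α := by
      rw [← sq_abs (E u), ← sub_nonneg]
      have key : α * |E u| ^ 2 + r ^ 2 / α - 2 * (|E u| * r) = (α * |E u| - r) ^ 2 / α := by
        field_simp; ring
      rw [key]; positivity
    nlinarith [ha u hu, sq_nonneg (E u)]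
  have := le_gronwallBound_of_liminf_deriv_right_le (a := 0) (b := t)
    (fun u hu => (hE2 u hu.1).continuousAt.continuousWithinAt)
    (fun u hu _ hr => (hE2 u hu.1).hasDerivWithinAt.liminf_right_slope_le hr) le_rfl
    (fun u hu => hbound u hu.1) t (right_mem_Icc.2 ht)
  simpa using this

theorem gronwallBound_neg_le_sq {α δ r : ℝ} (hα : 0 < α) (hr : 0 ≤ r) (t : ℝ) :
    gronwallBound (δ ^ 2) (-α) (r ^ 2 / α) t ≤ (|δ| * exp (-(α * t) / 2) + r / α) ^ 2 := by
  have hclosed : gronwallBound (δ ^ 2) (-α) (r ^ 2 / α) t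
      = δ ^ 2 * exp (-(α * t)) + (r / α) ^ 2 * (1 - exp (-(α * t))) := by
    rw [gronwallBound_of_K_ne_0 (neg_ne_zero.2 hα.ne')]
    field_simp
    ring_nf
  have hexp : exp (-(α * t) / 2) ^ 2 = exp (-(α * t)) := by
    rw [← exp_nat_mul]; ring_nf
  rw [hclosed, add_sq, mul_pow, sq_abs, hexp]
  have : 0 ≤ 2 * (|δ| * exp (-(α * t) / 2)) * (r / α) := by positivity
  have : 0 ≤ (r / α) ^ 2 * exp (-(α * t)) := by positivity
  linarith

theorem abs_le_of_hasDerivAt_eq_neg_mul_add {α r : ℝ} (hα : 0 < α)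
    (hE : ∀ t, 0 ≤ t → HasDerivAt E (-a t * E t + R t) t) (ha : ∀ t, 0 ≤ t → α ≤ a t)
    (hR : ∀ t, 0 ≤ t → |R t| ≤ r) {t : ℝ} (ht : 0 ≤ t) :
    |E t| ≤ |E 0| * exp (-(α * t) / 2) + r / α := by
  have hr : 0 ≤ r := (abs_nonneg _).trans (hR 0 le_rfl)
  refine abs_le_of_sq_le_sq ?_ (by positivity)
  exact (sq_le_gronwallBound_of_hasDerivAt_eq_neg_mul_add hα hE ha hR ht).trans
    (gronwallBound_neg_le_sq hα hr t)

end LinearDifferentialInequalities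

noncomputable def qssaComplex (e0 KM s0 p : ℝ) : ℝ := e0 * (s0 - p) / (KM + s0 - p)

section MichaelisMenten

variable {k1 k2 KM e0 s0 : ℝ}

theorem qssaComplex_nonneg (hKM : 0 < KM) (he0 : 0 ≤ e0) {p : ℝ} (hp : p ≤ s0) :
    0 ≤ qssaComplex e0 KM s0 p :=
  div_nonneg (mul_nonneg he0 (sub_nonneg.2 hp)) (by linarith)

theorem qssaComplex_le (hKM : 0 < KM) (he0 : 0 ≤ e0) {p : ℝ} (hp : p ≤ s0) :
    qssaComplex e0 KM s0 p ≤ e0 := by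
  rw [qssaComplex, div_le_iff₀ (by linarith)]
  nlinarith

theorem hasDerivAt_qssaComplex_comp {p : ℝ → ℝ} {p' t : ℝ} (hp : HasDerivAt p p' t)
    (hD : KM + s0 - p t ≠ 0) :
    HasDerivAt (fun u => qssaComplex e0 KM s0 (p u))
      (-(e0 * KM * p' / (KM + s0 - p t) ^ 2)) t := by
  have := ((hp.const_sub s0).const_mul e0).fun_div (hp.const_sub (KM + s0)) hD
  refine this.congr_deriv ?_
  field_simp
  ring

theorem michaelisMenten_rate_eq (c p : ℝ) (hD : KM + s0 - p ≠ 0) :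
    k1 * (e0 - c) * (s0 - c - p) - k1 * KM * c
      = k1 * (c + qssaComplex e0 KM s0 p + p - e0 - KM - s0) * (c - qssaComplex e0 KM s0 p)
        + k1 * qssaComplex e0 KM s0 p * (qssaComplex e0 KM s0 p - e0) := by
  unfold qssaComplex
  field_simp
  ring

theorem abs_qssaComplex_remainder_le (hk1 : 0 ≤ k1) (hk2 : 0 ≤ k2) (he0 : 0 ≤ e0) (hKM : 0 < KM)
    {c p lam : ℝ} (hc : 0 ≤ c) (hclam : c ≤ lam) (hp : p ≤ s0) :
    |k1 * qssaComplex e0 KM s0 p * (qssaComplex e0 KM s0 p - e0)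
        + e0 * KM * (k2 * c) / (KM + s0 - p) ^ 2|
      ≤ k1 * e0 ^ 2 / 4 + e0 * k2 * lam / KM := by
  set g := qssaComplex e0 KM s0 p
  have hg0 : 0 ≤ g := qssaComplex_nonneg hKM he0 hp
  have hge0 : g ≤ e0 := qssaComplex_le hKM he0 hp
  have hD : KM ≤ KM + s0 - p := by linarith
  have hgap_lower : -(k1 * e0 ^ 2 / 4) ≤ k1 * g * (g - e0) := by
    nlinarith [mul_nonneg hk1 (sq_nonneg (g - e0 / 2))]
  have hgap_nonpos : k1 * g * (g - e0) ≤ 0 :=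
    mul_nonpos_of_nonneg_of_nonpos (mul_nonneg hk1 hg0) (by linarith)
  have hdrift : e0 * KM * (k2 * c) / (KM + s0 - p) ^ 2 ≤ e0 * k2 * lam / KM := by
    rw [div_le_div_iff₀ (pow_pos (by linarith) 2) hKM]
    have : c * KM ^ 2 ≤ lam * (KM + s0 - p) ^ 2 :=
      mul_le_mul hclam (pow_le_pow_left₀ hKM.le hD 2) (by positivity) (hc.trans hclam)
    calc e0 * KM * (k2 * c) * KM = e0 * k2 * (c * KM ^ 2) := by ring
      _ ≤ e0 * k2 * (lam * (KM + s0 - p) ^ 2) := by gcongr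
      _ = e0 * k2 * lam * (KM + s0 - p) ^ 2 := by ring
  have hdrift' : 0 ≤ e0 * KM * (k2 * c) / (KM + s0 - p) ^ 2 := by positivity
  have : 0 ≤ e0 * k2 * lam / KM := hdrift'.trans hdrift
  exact abs_le.2 ⟨by linarith, by linarith⟩

variable {c p : ℝ → ℝ}

theorem hasDerivAt_sub_qssaComplex {t : ℝ}
    (hc : HasDerivAt c (k1 * (e0 - c t) * (s0 - c t - p t) - k1 * KM * c t) t)
    (hp : HasDerivAt p (k2 * c t) t) (hD : KM + s0 - p t ≠ 0) :
    HasDerivAt (fun u => c u - qssaComplex e0 KM s0 (p u))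
      (-(k1 * (e0 + KM + s0 - c t - qssaComplex e0 KM s0 (p t) - p t))
          * (c t - qssaComplex e0 KM s0 (p t))
        + (k1 * qssaComplex e0 KM s0 (p t) * (qssaComplex e0 KM s0 (p t) - e0)
          + e0 * KM * (k2 * c t) / (KM + s0 - p t) ^ 2)) t := by
  refine (hc.fun_sub (hasDerivAt_qssaComplex_comp hp hD)).congr_deriv ?_
  rw [michaelisMenten_rate_eq (c t) (p t) hD]
  ring

/-- The substrate `s = s0 - c - p` obeys `s' = -k1 (e0 - c) s + km1 c`, and `k1 (e0 - c)` has the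
explicit primitive `k1 e0 t - k1 p / k2` since `p' = k2 c`. -/
theorem substrate_nonneg {km1 : ℝ} (hKM : k1 * KM = km1 + k2) (hk2 : k2 ≠ 0) (hkm1 : 0 ≤ km1)
    (hc : ∀ t, 0 ≤ t → HasDerivAt c (k1 * (e0 - c t) * (s0 - c t - p t) - k1 * KM * c t) t)
    (hp : ∀ t, 0 ≤ t → HasDerivAt p (k2 * c t) t) (hc_nonneg : ∀ t, 0 ≤ t → 0 ≤ c t)
    (h0 : 0 ≤ s0 - c 0 - p 0) {t : ℝ} (ht : 0 ≤ t) : 0 ≤ s0 - c t - p t := by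
  refine nonneg_of_hasDerivAt_eq_mul_add (y := fun u => s0 - c u - p u)
    (A := fun u => k1 * p u / k2 - k1 * e0 * u)
    (a := fun u => -(k1 * (e0 - c u))) (b := fun u => km1 * c u) (fun u hu => ?_) (fun u hu => ?_)
    (fun u hu => mul_nonneg hkm1 (hc_nonneg u hu)) h0 ht
  · refine (((hp u hu).const_mul k1).div_const k2 |>.fun_sub
      ((hasDerivAt_id u).const_mul (k1 * e0))).congr_deriv ?_
    field_simp
    ring
  · refine (((hc u hu).const_sub s0).fun_sub (hp u hu)).congr_deriv ?_
    linear_combination c u * hKM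

end MichaelisMenten

theorem sQSSA_complex_error_bound_general (k1 km1 k2 e0 s0 KM lam : ℝ)
    (hk1 : 0 < k1) (hkm1 : 0 < km1) (hk2 : 0 < k2) (he0 : 0 < e0) (hs0 : 0 < s0)
    (hKM : KM = (km1 + k2) / k1)
    (c p : ℝ → ℝ)
    (hc : ∀ t : ℝ, 0 ≤ t →
      HasDerivAt c (k1 * (e0 - c t) * (s0 - c t - p t) - k1 * KM * c t) t)
    (hp : ∀ t : ℝ, 0 ≤ t → HasDerivAt p (k2 * c t) t)
    (hc0 : c 0 = 0) (hp0 : p 0 = 0)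
    (hcb : ∀ t : ℝ, 0 ≤ t → 0 ≤ c t ∧ c t ≤ min lam e0)
    (hpb : ∀ t : ℝ, 0 ≤ t → 0 ≤ p t ∧ p t ≤ s0) :
    ∀ t : ℝ, 0 ≤ t →
      |c t - e0 * (s0 - p t) / (KM + s0 - p t)| ≤
        |c 0 - e0 * (s0 - p 0) / (KM + s0 - p 0)| * Real.exp (-(k1 * KM * t) / 2)
          + (1 / (k1 * KM)) * (k1 * e0 ^ 2 / 4 + e0 * k2 * lam / KM) := by
  intro t ht
  have hKM_pos : 0 < KM := by rw [hKM]; positivity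
  have hk1KM : k1 * KM = km1 + k2 := by rw [hKM]; field_simp
  have hD : ∀ u, 0 ≤ u → 0 < KM + s0 - p u := fun u hu => by linarith [(hpb u hu).2]
  have hs : ∀ u, 0 ≤ u → 0 ≤ s0 - c u - p u := fun u hu =>
    substrate_nonneg hk1KM hk2.ne' hkm1.le hc hp (fun v hv => (hcb v hv).1)
      (by simp [hc0, hp0, hs0.le]) hu
  rw [one_div_mul_eq_div]
  refine abs_le_of_hasDerivAt_eq_neg_mul_add (mul_pos hk1 hKM_pos)
    (fun u hu => hasDerivAt_sub_qssaComplex (hc u hu) (hp u hu) (hD u hu).ne') (fun u hu => ?_)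
    (fun u hu => abs_qssaComplex_remainder_le hk1.le hk2.le he0.le hKM_pos (hcb u hu).1
      ((hcb u hu).2.trans (min_le_left _ _)) (hpb u hu).2) ht
  have hg := qssaComplex_le hKM_pos he0.le (hpb u hu).2
  exact mul_le_mul_of_nonneg_left (by linarith [hs u hu]) hk1.le

/-- energy bound on the error of the standard QSSA expression for the
complex concentration, in the (p,c) phase plane. -/
theorem sQSSA_complex_error_bound (k1 km1 k2 e0 s0 KM lam : ℝ)
    (hk1 : 0 < k1) (hkm1 : 0 < km1) (hk2 : 0 < k2) (he0 : 0 < e0) (hs0 : 0 < s0)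
    (hKM : KM = (km1 + k2) / k1)
    (hlam : lam = (e0 + KM + s0) / 2 - Real.sqrt ((e0 + KM + s0) ^ 2 - 4 * e0 * s0) / 2)
    (c p : ℝ → ℝ)
    (hc : ∀ t : ℝ, 0 ≤ t →
      HasDerivAt c (k1 * (e0 - c t) * (s0 - c t - p t) - k1 * KM * c t) t)
    (hp : ∀ t : ℝ, 0 ≤ t → HasDerivAt p (k2 * c t) t)
    (hc0 : c 0 = 0) (hp0 : p 0 = 0)
    (hcb : ∀ t : ℝ, 0 ≤ t → 0 ≤ c t ∧ c t ≤ min lam e0)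
    (hpb : ∀ t : ℝ, 0 ≤ t → 0 ≤ p t ∧ p t ≤ s0) :
    ∀ t : ℝ, 0 ≤ t →
      |c t - e0 * (s0 - p t) / (KM + s0 - p t)| ≤
        |c 0 - e0 * (s0 - p 0) / (KM + s0 - p 0)| * Real.exp (-(k1 * KM * t) / 2)
          + (1 / (k1 * KM)) * (k1 * e0 ^ 2 / 4 + e0 * k2 * lam / KM) :=
  sQSSA_complex_error_bound_general k1 km1 k2 e0 s0 KM lam hk1 hkm1 hk2 he0 hs0 hKM c p hc hp hc0
    hp0 hcb hpb
end

section
/- Let s, c : [0,∞) → ℝ with s differentiable satisfying s'(t) = −k1(e0 − c(t))s(t) + k−1·c(t) and s(0) = s0, where k1, k−1, k2, e0, s0 > 0 and K_M = (k−1+k2)/k1, and λ = ½(e0+K_M+s0) − ½√((e0+K_M+s0)² − 4e0·s0) (note λ < e0). Assume 0 ≤ s(t) and 0 ≤ c(t) ≤ λ for all t ≥ 0. Then s(t) ≤ s0·exp(−k1(e0 − λ)t/2) + k−1·λ/(k1(e0 − λ)) for all t ≥ 0. -/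
/-- substrate dissipation bound underlying the reverse QSSA. -/
theorem substrate_dissipation (k1 km1 k2 e0 s0 KM lam : ℝ)
    (hk1 : 0 < k1) (hkm1 : 0 < km1) (hk2 : 0 < k2) (he0 : 0 < e0) (hs0 : 0 < s0)
    (hKM : KM = (km1 + k2) / k1)
    (hlam : lam = (e0 + KM + s0) / 2 - Real.sqrt ((e0 + KM + s0) ^ 2 - 4 * e0 * s0) / 2)
    (s c : ℝ → ℝ)
    (hs : ∀ t : ℝ, 0 ≤ t → HasDerivAt s (-k1 * (e0 - c t) * s t + km1 * c t) t)
    (hs0' : s 0 = s0)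
    (hb : ∀ t : ℝ, 0 ≤ t → 0 ≤ s t ∧ 0 ≤ c t ∧ c t ≤ lam) :
    ∀ t : ℝ, 0 ≤ t →
      s t ≤ s0 * Real.exp (-(k1 * (e0 - lam) * t) / 2) + km1 * lam / (k1 * (e0 - lam)) := by
  have hKMpos : 0 < KM := by rw [hKM]; positivity
  set p := e0 + KM + s0 with hp'
  have hppos : 0 < p := by positivity
  have hD : 0 < p ^ 2 - 4 * e0 * s0 := by nlinarith [sq_nonneg (e0 - s0)]
  have hsq : p - 2 * e0 < Real.sqrt (p ^ 2 - 4 * e0 * s0) := by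
    rcases le_or_gt (p - 2 * e0) 0 with h | h
    · exact lt_of_le_of_lt h (Real.sqrt_pos.mpr hD)
    · rw [Real.lt_sqrt h.le]
      nlinarith
  have hlamlt : lam < e0 := by rw [hlam]; linarith
  have hlamnn : 0 ≤ lam := le_trans (hb 0 le_rfl).2.1 (hb 0 le_rfl).2.2
  set a := k1 * (e0 - lam) with ha'
  have ha : 0 < a := by
    apply mul_pos hk1; linarith
  set b := km1 * lam with hb'
  have hbnn : 0 ≤ b := by positivity
  set M := b / a with hM'
  have hMnn : 0 ≤ M := div_nonneg hbnn ha.le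
  -- the auxiliary function
  set g : ℝ → ℝ := fun x => (s x - M) * Real.exp (a * x) with hg'
  have hgd : ∀ x : ℝ, 0 ≤ x → HasDerivAt g
      (((-k1 * (e0 - c x) * s x + km1 * c x) + a * s x - b) * Real.exp (a * x)) x := by
    intro x hx
    have h1 : HasDerivAt (fun x => s x - M) (-k1 * (e0 - c x) * s x + km1 * c x) x :=
      (hs x hx).sub_const M
    have h2 : HasDerivAt (fun x => Real.exp (a * x)) (a * Real.exp (a * x)) x := by
      have := ((hasDerivAt_id x).const_mul a).exp
      simpa [mul_comm] using this
    have hMa : M * a = b := div_mul_cancel₀ b ha.ne'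
    have heq : (-k1 * (e0 - c x) * s x + km1 * c x) * Real.exp (a * x)
        + (s x - M) * (a * Real.exp (a * x))
        = ((-k1 * (e0 - c x) * s x + km1 * c x) + a * s x - b) * Real.exp (a * x) := by
      linear_combination (-(Real.exp (a * x))) * hMa
    have := h1.mul h2
    rw [heq] at this
    exact this
  have hderiv_nonpos : ∀ x : ℝ, 0 ≤ x →
      ((-k1 * (e0 - c x) * s x + km1 * c x) + a * s x - b) ≤ 0 := by
    intro x hx
    obtain ⟨hsnn, hcnn, hcle⟩ := hb x hx
    have : (-k1 * (e0 - c x) * s x + km1 * c x) + a * s x - b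
        = k1 * s x * (c x - lam) + km1 * (c x - lam) := by rw [ha', hb']; ring
    rw [this]
    have h1 : k1 * s x * (c x - lam) ≤ 0 :=
      mul_nonpos_of_nonneg_of_nonpos (by positivity) (by linarith)
    have h2 : km1 * (c x - lam) ≤ 0 :=
      mul_nonpos_of_nonneg_of_nonpos hkm1.le (by linarith)
    linarith
  have hanti : AntitoneOn g (Set.Ici 0) := by
    apply antitoneOn_of_deriv_nonpos (convex_Ici 0)
    · intro x hx
      exact (hgd x hx).continuousAt.continuousWithinAt
    · intro x hx
      rw [interior_Ici] at hx
      exact (hgd x (le_of_lt hx)).differentiableAt.differentiableWithinAt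
    · intro x hx
      rw [interior_Ici] at hx
      rw [(hgd x (le_of_lt hx)).deriv]
      exact mul_nonpos_of_nonpos_of_nonneg (hderiv_nonpos x (le_of_lt hx))
        (Real.exp_nonneg _)
  intro t ht
  have key : g t ≤ g 0 := hanti Set.self_mem_Ici ht ht
  have hg0 : g 0 = s0 - M := by simp [hg', hs0']
  have hkey2 : s t - M ≤ (s0 - M) * Real.exp (-(a * t)) := by
    have h1 : (s t - M) * Real.exp (a * t) ≤ s0 - M := by rw [← hg0]; exact key
    have h2 := mul_le_mul_of_nonneg_right h1 (Real.exp_nonneg (-(a * t)))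
    rwa [mul_assoc, ← Real.exp_add, add_neg_cancel, Real.exp_zero, mul_one] at h2
  have hexp2 : Real.exp (-(a * t)) ≤ Real.exp (-(a * t) / 2) := by
    apply Real.exp_le_exp.mpr
    nlinarith [mul_nonneg ha.le ht]
  have hMnn2 : 0 ≤ M * Real.exp (-(a * t)) := by positivity
  calc s t ≤ (s0 - M) * Real.exp (-(a * t)) + M := by linarith
    _ ≤ s0 * Real.exp (-(a * t) / 2) + M := by
        nlinarith [Real.exp_nonneg (-(a * t))]
end

section
/- Under the hypotheses of the substrate dissipation bound — s differentiable with s'(t) = −k1(e0 − c(t))s(t) + k−1·c(t), s(0) = s0, 0 ≤ s(t), 0 ≤ c(t) ≤ λ for all t ≥ 0, with k1, k−1, k2, e0, s0 > 0, K_M = (k−1+k2)/k1, λ = ½(e0+K_M+s0) − ½√((e0+K_M+s0)² − 4e0·s0) — define ε_ = K_M/(e0 − λ). Then s(t)/s0 ≤ exp(−k1(e0 − λ)t/2) + ε_ for all t ≥ 0. -/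
/-- dimensionless substrate dissipation bound in terms of the
reverse-QSSA small parameter ε_ = K_M/(e0 − λ). -/
theorem substrate_dissipation_dimensionless (k1 km1 k2 e0 s0 KM lam ε : ℝ)
    (hk1 : 0 < k1) (hkm1 : 0 < km1) (hk2 : 0 < k2) (he0 : 0 < e0) (hs0 : 0 < s0)
    (hKM : KM = (km1 + k2) / k1)
    (hlam : lam = (e0 + KM + s0) / 2 - Real.sqrt ((e0 + KM + s0) ^ 2 - 4 * e0 * s0) / 2)
    (hε : ε = KM / (e0 - lam))
    (s c : ℝ → ℝ)
    (hs : ∀ t : ℝ, 0 ≤ t → HasDerivAt s (-k1 * (e0 - c t) * s t + km1 * c t) t)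
    (hs0' : s 0 = s0)
    (hb : ∀ t : ℝ, 0 ≤ t → 0 ≤ s t ∧ 0 ≤ c t ∧ c t ≤ lam) :
    ∀ t : ℝ, 0 ≤ t →
      s t / s0 ≤ Real.exp (-(k1 * (e0 - lam) * t) / 2) + ε := by
  have hKMpos : 0 < KM := by
    rw [hKM]; positivity
  set X : ℝ := (e0 + KM + s0) ^ 2 - 4 * e0 * s0 with hX
  have hXnn : 0 ≤ X := by nlinarith [sq_nonneg (e0 - s0), sq_nonneg (e0 + KM + s0)]
  have hsq : Real.sqrt X ^ 2 = X := Real.sq_sqrt hXnn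
  have hsnn' : 0 ≤ Real.sqrt X := Real.sqrt_nonneg X
  have hlam_lt_s0 : lam < s0 := by
    rw [hlam]
    nlinarith [hsq, hsnn', mul_pos hs0 hKMpos, sq_nonneg (Real.sqrt X - (e0 + KM - s0))]
  have hlam_lt_e0 : lam < e0 := by
    rw [hlam]
    nlinarith [hsq, hsnn', mul_pos he0 hKMpos, sq_nonneg (Real.sqrt X - (s0 + KM - e0))]
  have hlam_nn : 0 ≤ lam := by
    have hle : Real.sqrt X ≤ e0 + KM + s0 := by
      nlinarith [hsq, hsnn', mul_pos he0 hs0]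
    rw [hlam]; linarith
  set a : ℝ := k1 * (e0 - lam) with ha_def
  have ha : 0 < a := mul_pos hk1 (by linarith)
  set b : ℝ := km1 * lam with hb_def
  have hbnn : 0 ≤ b := mul_nonneg hkm1.le hlam_nn
  clear_value X a b
  set g : ℝ → ℝ := fun u => (s u - b / a) * Real.exp (a * u) with hg
  have hgd : ∀ u, 0 ≤ u → HasDerivAt g
      ((-k1 * (e0 - c u) * s u + km1 * c u) * Real.exp (a * u)
        + (s u - b / a) * (a * Real.exp (a * u))) u := by
    intro u hu
    have h1 : HasDerivAt (fun v => s v - b / a) (-k1 * (e0 - c u) * s u + km1 * c u) u :=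
      (hs u hu).sub_const _
    have h2 : HasDerivAt (fun v : ℝ => Real.exp (a * v)) (a * Real.exp (a * u)) u := by
      simpa [mul_comm] using ((hasDerivAt_id u).const_mul a).exp
    exact h1.mul h2
  have hanti : AntitoneOn g (Set.Ici (0 : ℝ)) := by
    apply antitoneOn_of_deriv_nonpos (convex_Ici 0)
    · intro u hu
      exact (hgd u hu).continuousAt.continuousWithinAt
    · intro u hu
      rw [interior_Ici] at hu
      exact ((hgd u hu.le).differentiableAt).differentiableWithinAt
    · intro u hu
      rw [interior_Ici] at hu
      rw [(hgd u hu.le).deriv]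
      obtain ⟨hsnn, hcnn, hcle⟩ := hb u hu.le
      have key : (-k1 * (e0 - c u) * s u + km1 * c u) + (s u - b / a) * a ≤ 0 := by
        have hba : (s u - b / a) * a = a * s u - b := by field_simp
        rw [hba]
        have h3 : km1 * c u ≤ b := hb_def ▸ mul_le_mul_of_nonneg_left hcle hkm1.le
        nlinarith [mul_nonneg (mul_nonneg hk1.le hsnn) (sub_nonneg.mpr hcle)]
      calc (-k1 * (e0 - c u) * s u + km1 * c u) * Real.exp (a * u)
            + (s u - b / a) * (a * Real.exp (a * u))
          = ((-k1 * (e0 - c u) * s u + km1 * c u) + (s u - b / a) * a) * Real.exp (a * u) := by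
            ring
        _ ≤ 0 := mul_nonpos_of_nonpos_of_nonneg key (Real.exp_pos _).le
  intro t ht
  have hgt : g t ≤ g 0 := hanti (Set.self_mem_Ici) ht ht
  have hg0 : g 0 = s0 - b / a := by simp [hg, hs0']
  have hexp : (0:ℝ) < Real.exp (a * t) := Real.exp_pos _
  have hst : s t ≤ s0 * Real.exp (-(a * t)) + b / a := by
    have : (s t - b / a) * Real.exp (a * t) ≤ s0 - b / a := by rw [← hg0]; exact hgt
    have h4 : s t - b / a ≤ (s0 - b / a) * Real.exp (-(a * t)) := by
      rw [Real.exp_neg, ← div_eq_mul_inv, le_div_iff₀ hexp]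
      exact this
    have h5 : (s0 - b / a) * Real.exp (-(a * t)) ≤ s0 * Real.exp (-(a * t)) := by
      apply mul_le_mul_of_nonneg_right _ (Real.exp_pos _).le
      have : 0 ≤ b / a := div_nonneg hbnn ha.le
      linarith
    linarith
  -- now convert
  have hexp2 : Real.exp (-(a * t)) ≤ Real.exp (-(a * t) / 2) := by
    apply Real.exp_le_exp.mpr
    have hat : 0 ≤ a * t := mul_nonneg ha.le ht
    linarith
  have h7 : 0 < e0 - lam := by linarith
  have hba2 : b / a / s0 ≤ ε := by
    rw [hε, hKM, hb_def, ha_def, div_div]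
    rw [div_le_div_iff₀ (by positivity) h7]
    have heq : (km1 + k2) / k1 * (k1 * (e0 - lam) * s0) = (km1 + k2) * ((e0 - lam) * s0) := by
      field_simp
    rw [heq]
    have h6 : km1 * lam ≤ (km1 + k2) * s0 := by nlinarith
    calc km1 * lam * (e0 - lam) ≤ (km1 + k2) * s0 * (e0 - lam) :=
          mul_le_mul_of_nonneg_right h6 h7.le
      _ = (km1 + k2) * ((e0 - lam) * s0) := by ring
  have hfin : s t / s0 ≤ Real.exp (-(a * t)) + b / a / s0 := by
    rw [div_le_iff₀ hs0]
    calc s t ≤ s0 * Real.exp (-(a * t)) + b / a := hst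
      _ = (Real.exp (-(a * t)) + b / a / s0) * s0 := by field_simp
  linarith [hexp2, hba2, hfin]
end

section
/- Fix positive reals e0, s0 with e0 ≠ s0, and for each K_M > 0 define λ(K_M) = ½(e0+K_M+s0) − ½√((e0+K_M+s0)² − 4e0·s0) and ε_(K_M) = K_M/(e0 − λ(K_M)). Then as K_M → 0⁺: if s0 < e0 then ε_(K_M) → 0, while if s0 > e0 then ε_(K_M) → (s0 − e0)/e0. -/
/-!
Rationalising the denominator: since the discriminant equals `(s₀ + K - e₀)² + 4 e₀ K`, one gets
`e₀ - λ(K) = 2 e₀ K / (√disc + s₀ + K - e₀)`, so `ε(K) = (√disc + s₀ + K - e₀) / (2 e₀)` for `K > 0`.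
This expression is continuous at `K = 0`, where `√disc = |s₀ - e₀|`; its value there is `0` when
`s₀ < e₀` and `(s₀ - e₀) / e₀` when `e₀ < s₀`.
-/

open Filter Topology Real

section SmallerRoot

variable {e s K : ℝ}

lemma discr_eq_sq_add (e s K : ℝ) :
    (e + K + s) ^ 2 - 4 * e * s = (s + K - e) ^ 2 + 4 * e * K := by
  ring

lemma abs_lt_sqrt_discr (he : 0 < e) (hK : 0 < K) :
    |s + K - e| < √((e + K + s) ^ 2 - 4 * e * s) := by
  rw [Real.lt_sqrt (abs_nonneg _), sq_abs, discr_eq_sq_add]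
  nlinarith

lemma div_sub_smallerRoot_eq (he : 0 < e) (hK : 0 < K) :
    K / (e - ((e + K + s) / 2 - √((e + K + s) ^ 2 - 4 * e * s) / 2)) =
      (√((e + K + s) ^ 2 - 4 * e * s) + (s + K - e)) / (2 * e) := by
  have hlt := abs_lt_sqrt_discr (s := s) he hK
  set r := √((e + K + s) ^ 2 - 4 * e * s)
  have hr_sq : r ^ 2 = (s + K - e) ^ 2 + 4 * e * K := by
    rw [Real.sq_sqrt (by rw [discr_eq_sq_add]; positivity), discr_eq_sq_add]
  have hden : 0 < e - ((e + K + s) / 2 - r / 2) := by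
    linarith [le_abs_self (s + K - e)]
  rw [div_eq_div_iff hden.ne' (by positivity)]
  linear_combination (-1 / 2 : ℝ) * hr_sq

lemma tendsto_div_sub_smallerRoot (he : 0 < e) :
    Tendsto (fun K : ℝ => K / (e - ((e + K + s) / 2 - √((e + K + s) ^ 2 - 4 * e * s) / 2)))
      (𝓝[>] 0) (𝓝 ((|s - e| + (s - e)) / (2 * e))) := by
  have hcont : Continuous fun K : ℝ =>
      (√((e + K + s) ^ 2 - 4 * e * s) + (s + K - e)) / (2 * e) := by
    fun_prop
  have hlim := (hcont.tendsto 0).mono_left (nhdsWithin_le_nhds (s := Set.Ioi 0))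
  rw [discr_eq_sq_add, mul_zero, add_zero, add_zero, Real.sqrt_sq_eq_abs] at hlim
  refine hlim.congr' ?_
  filter_upwards [self_mem_nhdsWithin] with K hK
  exact (div_sub_smallerRoot_eq he hK).symm

end SmallerRoot

theorem rQSSA_eps_limit_general (e0 s0 : ℝ) (he0 : 0 < e0) :
    (s0 < e0 →
      Filter.Tendsto
        (fun KM : ℝ => KM / (e0 -
          ((e0 + KM + s0) / 2 - Real.sqrt ((e0 + KM + s0) ^ 2 - 4 * e0 * s0) / 2)))
        (nhdsWithin 0 (Set.Ioi 0)) (nhds 0)) ∧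
    (e0 < s0 →
      Filter.Tendsto
        (fun KM : ℝ => KM / (e0 -
          ((e0 + KM + s0) / 2 - Real.sqrt ((e0 + KM + s0) ^ 2 - 4 * e0 * s0) / 2)))
        (nhdsWithin 0 (Set.Ioi 0)) (nhds ((s0 - e0) / e0))) := by
  have hlim := tendsto_div_sub_smallerRoot (s := s0) he0
  refine ⟨fun hlt => ?_, fun hlt => ?_⟩
  · rwa [abs_of_neg (sub_neg.mpr hlt), neg_add_cancel, zero_div] at hlim
  · convert hlim using 2
    rw [abs_of_pos (sub_pos.mpr hlt)]
    field_simp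
    ring

/-- limiting behaviour of the reverse-QSSA small parameter
ε_(K_M) = K_M/(e0 − λ(K_M)) as K_M → 0⁺. -/
theorem rQSSA_eps_limit (e0 s0 : ℝ) (he0 : 0 < e0) (hs0 : 0 < s0) (hne : e0 ≠ s0) :
    (s0 < e0 →
      Filter.Tendsto
        (fun KM : ℝ => KM / (e0 -
          ((e0 + KM + s0) / 2 - Real.sqrt ((e0 + KM + s0) ^ 2 - 4 * e0 * s0) / 2)))
        (nhdsWithin 0 (Set.Ioi 0)) (nhds 0)) ∧
    (e0 < s0 →
      Filter.Tendsto
        (fun KM : ℝ => KM / (e0 -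
          ((e0 + KM + s0) / 2 - Real.sqrt ((e0 + KM + s0) ^ 2 - 4 * e0 * s0) / 2)))
        (nhdsWithin 0 (Set.Ioi 0)) (nhds ((s0 - e0) / e0))) :=
  rQSSA_eps_limit_general e0 s0 he0
end

section
/- Let c, p : [0,∞) → ℝ be differentiable and satisfy c' = k1(e0 − c)(s0 − c − p) − k1·K_M·c and p' = k2·c with c(0) = 0, p(0) = 0, where k1, k−1, k2, e0, s0 > 0 and K_M = (k−1+k2)/k1. Assume 0 ≤ c(t) ≤ λ and 0 ≤ p(t) ≤ s0 for all t ≥ 0, where λ = ½(e0+K_M+s0) − ½√((e0+K_M+s0)² − 4e0·s0). Then with h⁻(p) = ½(e0+K_M+s0−p) − ½√((e0+K_M+s0−p)² − 4e0(s0−p)), η = e0/K_M and κ = k−1/k2, one has for all t ≥ 0: |c(t) − h⁻(p(t))| ≤ λ·exp(−k1(e0 + K_M − λ)t/2) + (η·λ/((1+η)(1+κ)))·(K_M/(e0 − λ + K_M)). -/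
/-!
Write `u = c - h⁻(p)`. Since `h⁻(p)` and `h⁺(p)` are the roots of the `c`-nullcline quadratic,
`c' = k1 (c - h⁻(p)) (c - h⁺(p))`, so along the trajectory
`u' = k1 (c - h⁺(p)) u + k2 c (e0 - h⁻(p)) / √disc`.
The multiplier is at most `-k1 (e0 + KM - λ)` because `c ≤ λ` and `h⁺ ≥ e0 + KM`, and the forcing
lies in `[0, k2 λ e0 / (e0 + KM)]` because `h⁻` has slope in `[-e0 / (e0 + KM), 0]`.
A comparison argument for `|u|` with the solution of the linear equation `B' = -α B + β`,
`B(0) = λ = |u(0)|`, then gives the bound.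
-/

open Real

theorem le_exp_decay_of_hasDerivAt {f f' : ℝ → ℝ} {α β a t : ℝ} (hα : 0 < α) (hβ : 0 ≤ β)
    (ha : 0 ≤ a) (hf : ∀ s, 0 ≤ s → HasDerivAt f (f' s) s) (hf0 : f 0 ≤ a)
    (hf' : ∀ s, 0 ≤ s → 0 ≤ f s → f' s ≤ -α * f s + β) (ht : 0 ≤ t) :
    f t ≤ β / α + (a - β / α) * exp (-α * t) := by
  set B : ℝ → ℝ := fun s => β / α + (a - β / α) * exp (-α * s) with hB
  have hB_deriv (s : ℝ) : HasDerivAt B (-α * B s + β) s := by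
    have := (((hasDerivAt_id s).const_mul (-α)).exp.const_mul (a - β / α)).const_add (β / α)
    refine this.congr_deriv ?_
    simp only [hB, id]
    field_simp
    ring
  -- for `s ≥ 0`, `B s` is a convex combination of `a` and `β / α`
  have hB_nonneg {s : ℝ} (hs : 0 ≤ s) : 0 ≤ B s := by
    have hexp : exp (-α * s) ≤ 1 := exp_le_one_iff.2 (by nlinarith)
    have : 0 ≤ β / α := by positivity
    simp only [hB]
    nlinarith [exp_pos (-α * s)]
  suffices ∀ ε > 0, f t ≤ B t + ε from le_of_forall_pos_le_add this
  intro ε hε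
  refine image_le_of_deriv_right_lt_deriv_boundary (B := fun s => B s + ε)
    (fun s hs => (hf s hs.1).continuousAt.continuousWithinAt)
    (fun s hs => (hf s hs.1).hasDerivWithinAt) ?_ (fun s => (hB_deriv s).add_const ε) ?_
    ⟨ht, le_rfl⟩
  · simp only [hB, mul_zero, exp_zero]
    linarith
  · intro s hs hfs
    calc f' s ≤ -α * f s + β := hf' s hs.1 (hfs ▸ by linarith [hB_nonneg hs.1])
      _ < -α * B s + β := by rw [hfs]; nlinarith

theorem abs_le_exp_decay_of_hasDerivAt {f m g : ℝ → ℝ} {α β a t : ℝ} (hα : 0 < α)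
    (hf : ∀ s, 0 ≤ s → HasDerivAt f (m s * f s + g s) s) (hf0 : |f 0| ≤ a)
    (hm : ∀ s, 0 ≤ s → m s ≤ -α) (hg : ∀ s, 0 ≤ s → |g s| ≤ β) (ht : 0 ≤ t) :
    |f t| ≤ β / α + (a - β / α) * exp (-α * t) := by
  have hβ : 0 ≤ β := (abs_nonneg _).trans (hg 0 le_rfl)
  have ha : 0 ≤ a := (abs_nonneg _).trans hf0
  rw [abs_le] at hf0 ⊢
  refine ⟨neg_le.1 ?_, ?_⟩
  · refine le_exp_decay_of_hasDerivAt (f := fun s => -f s) hα hβ ha (fun s hs => (hf s hs).neg)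
      (neg_le.1 hf0.1) (fun s hs hfs => ?_) ht
    have := abs_le.1 (hg s hs)
    nlinarith [hm s hs]
  · refine le_exp_decay_of_hasDerivAt hα hβ ha hf hf0.2 (fun s hs hfs => ?_) ht
    have := abs_le.1 (hg s hs)
    nlinarith [hm s hs]

namespace MichaelisMenten

variable (e0 KM s0 : ℝ)

/-- `hMinus` and `hPlus` are the branches `h∓(p)` of the `c`-nullcline
`(e0 - c) (s0 - c - p) = KM c`, and `disc` is the discriminant of that quadratic in `c`. -/
def disc (p : ℝ) : ℝ := (e0 + KM + s0 - p) ^ 2 - 4 * e0 * (s0 - p)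

noncomputable def hMinus (p : ℝ) : ℝ := (e0 + KM + s0 - p) / 2 - √(disc e0 KM s0 p) / 2

noncomputable def hPlus (p : ℝ) : ℝ := (e0 + KM + s0 - p) / 2 + √(disc e0 KM s0 p) / 2

variable {e0 KM s0}

theorem disc_eq (p : ℝ) : disc e0 KM s0 p = (s0 - p + KM - e0) ^ 2 + 4 * e0 * KM := by
  unfold disc; ring

theorem disc_pos (he0 : 0 < e0) (hKM : 0 < KM) (p : ℝ) : 0 < disc e0 KM s0 p := by
  rw [disc_eq]; positivity

theorem sub_hMinus_mul_sub_hPlus (he0 : 0 < e0) (hKM : 0 < KM) (p x : ℝ) :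
    (x - hMinus e0 KM s0 p) * (x - hPlus e0 KM s0 p) = (e0 - x) * (s0 - x - p) - KM * x := by
  have := sq_sqrt (disc_pos (s0 := s0) he0 hKM p).le
  unfold hMinus hPlus
  unfold disc at *
  linear_combination (-1 / 4 : ℝ) * this

theorem hMinus_le (he0 : 0 ≤ e0) (hKM : 0 ≤ KM) (p : ℝ) : hMinus e0 KM s0 p ≤ e0 := by
  have : s0 - p + KM - e0 ≤ √(disc e0 KM s0 p) :=
    le_sqrt_of_sq_le (by rw [disc_eq]; nlinarith)
  unfold hMinus; linarith

theorem hMinus_nonneg (he0 : 0 ≤ e0) (hKM : 0 ≤ KM) {p : ℝ} (hp : p ≤ s0) :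
    0 ≤ hMinus e0 KM s0 p := by
  have : √(disc e0 KM s0 p) ≤ e0 + KM + s0 - p :=
    sqrt_le_iff.2 ⟨by linarith, by unfold disc; nlinarith⟩
  unfold hMinus; linarith

theorem add_le_hPlus (hKM : 0 ≤ KM) {p : ℝ} (hp : p ≤ s0) : e0 + KM ≤ hPlus e0 KM s0 p := by
  have : e0 + KM - (s0 - p) ≤ √(disc e0 KM s0 p) :=
    le_sqrt_of_sq_le (by unfold disc; nlinarith)
  unfold hPlus; linarith

theorem hasDerivAt_hMinus (he0 : 0 < e0) (hKM : 0 < KM) (p : ℝ) :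
    HasDerivAt (hMinus e0 KM s0) (-((e0 - hMinus e0 KM s0 p) / √(disc e0 KM s0 p))) p := by
  have hlin : HasDerivAt (fun q => e0 + KM + s0 - q) (-1) p := by
    simpa using (hasDerivAt_id p).const_sub (e0 + KM + s0)
  have hdisc : HasDerivAt (disc e0 KM s0) (2 * (e0 + KM + s0 - p) * (-1) - 4 * e0 * (-1)) p :=
    (hlin.fun_pow 2).fun_sub (((hasDerivAt_id p).const_sub s0).const_mul (4 * e0))
      |>.congr_deriv (by simp)
  have := (hlin.div_const 2).sub ((hdisc.sqrt (disc_pos he0 hKM p).ne').div_const 2)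
  refine this.congr_deriv ?_
  have := (sqrt_pos.2 (disc_pos (s0 := s0) he0 hKM p)).ne'
  unfold hMinus
  field_simp
  ring

theorem abs_sub_hMinus_div_sqrt_disc_le (he0 : 0 < e0) (hKM : 0 < KM) {p : ℝ} (hp : p ≤ s0) :
    |(e0 - hMinus e0 KM s0 p) / √(disc e0 KM s0 p)| ≤ e0 / (e0 + KM) := by
  have hR := sqrt_pos.2 (disc_pos (s0 := s0) he0 hKM p)
  have h0 := hMinus_nonneg he0.le hKM.le hp
  have hup := add_le_hPlus (e0 := e0) hKM.le hp
  have : √(disc e0 KM s0 p) = hPlus e0 KM s0 p - hMinus e0 KM s0 p := by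
    unfold hPlus hMinus; ring
  rw [abs_of_nonneg (div_nonneg (sub_nonneg.2 (hMinus_le he0.le hKM.le p)) hR.le),
    div_le_div_iff₀ hR (by positivity), this]
  nlinarith

theorem hasDerivAt_sub_hMinus_comp {k1 k2 : ℝ} {c p : ℝ → ℝ} {t : ℝ} (he0 : 0 < e0)
    (hKM : 0 < KM) (hc : HasDerivAt c (k1 * (e0 - c t) * (s0 - c t - p t) - k1 * KM * c t) t)
    (hp : HasDerivAt p (k2 * c t) t) :
    HasDerivAt (fun s => c s - hMinus e0 KM s0 (p s))
      (k1 * (c t - hPlus e0 KM s0 (p t)) * (c t - hMinus e0 KM s0 (p t))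
        + (e0 - hMinus e0 KM s0 (p t)) / √(disc e0 KM s0 (p t)) * (k2 * c t)) t := by
  refine (hc.sub ((hasDerivAt_hMinus he0 hKM (p t)).comp t hp)).congr_deriv ?_
  linear_combination (-k1) * sub_hMinus_mul_sub_hPlus (s0 := s0) he0 hKM (p t) (c t)

end MichaelisMenten

open MichaelisMenten in
/-- main enslavement bound for the complex by the physical branch of the
c-nullcline (total QSSA). -/
theorem tQSSA_enslavement_bound (k1 km1 k2 e0 s0 KM lam η κ : ℝ)
    (hk1 : 0 < k1) (hkm1 : 0 < km1) (hk2 : 0 < k2) (he0 : 0 < e0) (hs0 : 0 < s0)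
    (hKM : KM = (km1 + k2) / k1)
    (hlam : lam = (e0 + KM + s0) / 2 - Real.sqrt ((e0 + KM + s0) ^ 2 - 4 * e0 * s0) / 2)
    (hη : η = e0 / KM) (hκ : κ = km1 / k2)
    (c p : ℝ → ℝ)
    (hc : ∀ t : ℝ, 0 ≤ t →
      HasDerivAt c (k1 * (e0 - c t) * (s0 - c t - p t) - k1 * KM * c t) t)
    (hp : ∀ t : ℝ, 0 ≤ t → HasDerivAt p (k2 * c t) t)
    (hc0 : c 0 = 0) (hp0 : p 0 = 0)
    (hcb : ∀ t : ℝ, 0 ≤ t → 0 ≤ c t ∧ c t ≤ lam)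
    (hpb : ∀ t : ℝ, 0 ≤ t → 0 ≤ p t ∧ p t ≤ s0) :
    ∀ t : ℝ, 0 ≤ t →
      |c t - ((e0 + KM + s0 - p t) / 2
          - Real.sqrt ((e0 + KM + s0 - p t) ^ 2 - 4 * e0 * (s0 - p t)) / 2)| ≤
        lam * Real.exp (-(k1 * (e0 + KM - lam) * t) / 2)
          + (η * lam / ((1 + η) * (1 + κ))) * (KM / (e0 - lam + KM)) := by
  intro t ht
  have hKM0 : 0 < KM := by rw [hKM]; positivity
  have hlam_eq : hMinus e0 KM s0 0 = lam := by simp [hMinus, disc, hlam]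
  have hlam0 : 0 ≤ lam := hlam_eq ▸ hMinus_nonneg he0.le hKM0.le hs0.le
  have hlam_le : lam ≤ e0 := hlam_eq ▸ hMinus_le he0.le hKM0.le 0
  set α := k1 * (e0 + KM - lam) with hα
  set β := e0 / (e0 + KM) * (k2 * lam) with hβ
  have hα0 : 0 < α := mul_pos hk1 (by linarith)
  have hdev : |c t - hMinus e0 KM s0 (p t)| ≤ β / α + (lam - β / α) * exp (-α * t) := by
    refine abs_le_exp_decay_of_hasDerivAt hα0
      (fun s hs => hasDerivAt_sub_hMinus_comp he0 hKM0 (hc s hs) (hp s hs))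
      (by simp [hc0, hp0, hlam_eq, abs_of_nonneg hlam0]) (fun s hs => ?_) (fun s hs => ?_) ht
    · have := add_le_hPlus (e0 := e0) hKM0.le (hpb s hs).2
      nlinarith [(hcb s hs).2]
    · have hflux := mul_nonneg hk2.le (hcb s hs).1
      rw [abs_mul, abs_of_nonneg hflux]
      exact mul_le_mul (abs_sub_hMinus_div_sqrt_disc_le he0 hKM0 (hpb s hs).2)
        (mul_le_mul_of_nonneg_left (hcb s hs).2 hk2.le) hflux (by positivity)
  have hconst : η * lam / ((1 + η) * (1 + κ)) * (KM / (e0 - lam + KM)) = β / α := by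
    have : 0 < e0 + KM - lam := by linarith
    rw [hη, hκ, hα, hβ, hKM] at *
    field_simp
    ring
  have hexp : exp (-α * t) ≤ exp (-(α * t) / 2) := exp_le_exp.2 (by nlinarith)
  have hβα : 0 ≤ β / α := by positivity
  calc _ = |c t - hMinus e0 KM s0 (p t)| := rfl
    _ ≤ β / α + (lam - β / α) * exp (-α * t) := hdev
    _ ≤ lam * exp (-(α * t) / 2) + β / α := by nlinarith [exp_pos (-α * t)]
    _ = _ := by rw [hconst, add_comm]
end

section
/- Let e0, s0, K_M be positive reals and define h⁻(p) = ½(e0+K_M+s0−p) − ½√((e0+K_M+s0−p)² − 4e0(s0−p)) for p in [0, s0]. Then h⁻ is twice differentiable on [0, s0], its second derivative satisfies (h⁻)''(p) = −2e0·K_M/((e0+K_M+s0−p)² − 4e0(s0−p))^{3/2} < 0 for all p in [0, s0], (h⁻)'(p) < 0 on [0, s0], and the maximum of |(h⁻)'(p)| over [0, s0] equals −(h⁻)'(s0) = e0/(K_M + e0). -/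
/-!
Completing the square, `(e0 + KM + s0 - p)² - 4 e0 (s0 - p) = (s0 + KM - e0 - p)² + 4 e0 KM`, so
`h⁻(p) = (a - p)/2 - φ(b - p)/2` with `φ(x) = √(x² + c)` and `c = 4 e0 KM > 0`. Everything then follows
from `φ'(x) = x / φ(x) ∈ (-1, 1)` and `φ''(x) = c / φ(x)³ > 0`: the first derivative of `h⁻` is
negative, the second is `-c / (2 φ³)`, so `|(h⁻)'| = -(h⁻)'` increases and is largest at `p = s0`,
where `φ(KM - e0) = KM + e0`.
-/

open Real

section SqrtSqAdd

variable {c : ℝ}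

lemma hasDerivAt_sqrt_sq_add (hc : 0 < c) (x : ℝ) :
    HasDerivAt (fun x => √(x ^ 2 + c)) (x / √(x ^ 2 + c)) x := by
  have hs : 0 < √(x ^ 2 + c) := by positivity
  convert ((hasDerivAt_pow 2 x).add_const c).sqrt (by positivity) using 1
  field_simp
  ring

lemma hasDerivAt_div_sqrt_sq_add (hc : 0 < c) (x : ℝ) :
    HasDerivAt (fun x => x / √(x ^ 2 + c)) (c / √(x ^ 2 + c) ^ 3) x := by
  have hs : 0 < √(x ^ 2 + c) := by positivity
  refine ((hasDerivAt_id' x).div (hasDerivAt_sqrt_sq_add hc x) hs.ne').congr_deriv ?_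
  field_simp
  rw [sq_sqrt (by positivity)]
  ring

lemma div_sqrt_sq_add_lt_one (hc : 0 < c) (x : ℝ) : x / √(x ^ 2 + c) < 1 := by
  rw [div_lt_one (by positivity)]
  exact lt_sqrt_of_sq_lt (by linarith)

end SqrtSqAdd

section LowerBranch

variable {c : ℝ}

lemma hasDerivAt_lowerBranch (a b : ℝ) (hc : 0 < c) (p : ℝ) :
    HasDerivAt (fun p => (a - p) / 2 - √((b - p) ^ 2 + c) / 2)
      (((b - p) / √((b - p) ^ 2 + c) - 1) / 2) p := by
  have hroot := (hasDerivAt_sqrt_sq_add hc (b - p)).comp p ((hasDerivAt_id' p).const_sub b)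
  refine ((((hasDerivAt_id' p).const_sub a).div_const 2).sub (hroot.div_const 2)).congr_deriv ?_
  ring

lemma hasDerivAt_lowerBranch_deriv (b : ℝ) (hc : 0 < c) (p : ℝ) :
    HasDerivAt (fun p => ((b - p) / √((b - p) ^ 2 + c) - 1) / 2)
      (-(c / √((b - p) ^ 2 + c) ^ 3) / 2) p := by
  have hquot := (hasDerivAt_div_sqrt_sq_add hc (b - p)).comp p ((hasDerivAt_id' p).const_sub b)
  refine ((hquot.sub_const 1).div_const 2).congr_deriv ?_
  ring

lemma strictAnti_lowerBranch_deriv (b : ℝ) (hc : 0 < c) :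
    StrictAnti (fun p => ((b - p) / √((b - p) ^ 2 + c) - 1) / 2) := by
  refine strictAnti_of_deriv_neg fun p => ?_
  rw [(hasDerivAt_lowerBranch_deriv b hc p).deriv]
  have : 0 < c / √((b - p) ^ 2 + c) ^ 3 := by positivity
  linarith

end LowerBranch

theorem hminus_derivative_properties_general (e0 s0 KM : ℝ)
    (he0 : 0 < e0) (hKM : 0 < KM) :
    let hm : ℝ → ℝ := fun p =>
      (e0 + KM + s0 - p) / 2 - Real.sqrt ((e0 + KM + s0 - p) ^ 2 - 4 * e0 * (s0 - p)) / 2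
    (∀ p ∈ Set.Icc (0 : ℝ) s0, DifferentiableAt ℝ hm p) ∧
    (∀ p ∈ Set.Icc (0 : ℝ) s0, DifferentiableAt ℝ (deriv hm) p) ∧
    (∀ p ∈ Set.Icc (0 : ℝ) s0,
      deriv (deriv hm) p
          = -(2 * e0 * KM) / Real.sqrt ((e0 + KM + s0 - p) ^ 2 - 4 * e0 * (s0 - p)) ^ 3 ∧
      deriv (deriv hm) p < 0) ∧
    (∀ p ∈ Set.Icc (0 : ℝ) s0, deriv hm p < 0) ∧
    IsMaxOn (fun p => |deriv hm p|) (Set.Icc (0 : ℝ) s0) s0 ∧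
    -(deriv hm s0) = e0 / (KM + e0) := by
  intro hm
  have hc : 0 < 4 * e0 * KM := by positivity
  have hdisc : ∀ p, (e0 + KM + s0 - p) ^ 2 - 4 * e0 * (s0 - p)
      = (s0 + KM - e0 - p) ^ 2 + 4 * e0 * KM := fun p => by ring
  simp only [hm, hdisc]
  set b := s0 + KM - e0
  have hd1 := hasDerivAt_lowerBranch (e0 + KM + s0) b hc
  have hd2 := hasDerivAt_lowerBranch_deriv b hc
  rw [show deriv _ = _ from funext fun p => (hd1 p).deriv]
  simp only [fun p => (hd2 p).deriv]
  have hneg1 p : ((b - p) / √((b - p) ^ 2 + 4 * e0 * KM) - 1) / 2 < 0 := by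
    linarith [div_sqrt_sq_add_lt_one hc (b - p)]
  have hroot_s0 : √((b - s0) ^ 2 + 4 * e0 * KM) = KM + e0 := by
    rw [show (b - s0) ^ 2 + 4 * e0 * KM = (KM + e0) ^ 2 by ring, sqrt_sq (by positivity)]
  refine ⟨fun p _ => (hd1 p).differentiableAt, fun p _ => (hd2 p).differentiableAt,
    fun p _ => ⟨by ring, ?_⟩, fun p _ => hneg1 p, fun p hp => ?_, ?_⟩
  · have : 0 < 4 * e0 * KM / √((b - p) ^ 2 + 4 * e0 * KM) ^ 3 := by positivity
    linarith
  · simp only [Set.mem_ofPred_eq, abs_of_neg (hneg1 _)]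
    exact neg_le_neg ((strictAnti_lowerBranch_deriv b hc).antitone hp.2)
  · rw [hroot_s0]
    field_simp
    ring

/-- derivative properties of the physical branch h⁻ of the c-nullcline
in the (p,c) phase plane. -/
theorem hminus_derivative_properties (e0 s0 KM : ℝ)
    (he0 : 0 < e0) (hs0 : 0 < s0) (hKM : 0 < KM) :
    let hm : ℝ → ℝ := fun p =>
      (e0 + KM + s0 - p) / 2 - Real.sqrt ((e0 + KM + s0 - p) ^ 2 - 4 * e0 * (s0 - p)) / 2
    (∀ p ∈ Set.Icc (0 : ℝ) s0, DifferentiableAt ℝ hm p) ∧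
    (∀ p ∈ Set.Icc (0 : ℝ) s0, DifferentiableAt ℝ (deriv hm) p) ∧
    (∀ p ∈ Set.Icc (0 : ℝ) s0,
      deriv (deriv hm) p
          = -(2 * e0 * KM) / Real.sqrt ((e0 + KM + s0 - p) ^ 2 - 4 * e0 * (s0 - p)) ^ 3 ∧
      deriv (deriv hm) p < 0) ∧
    (∀ p ∈ Set.Icc (0 : ℝ) s0, deriv hm p < 0) ∧
    IsMaxOn (fun p => |deriv hm p|) (Set.Icc (0 : ℝ) s0) s0 ∧
    -(deriv hm s0) = e0 / (KM + e0) :=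
  hminus_derivative_properties_general e0 s0 KM he0 hKM
end

section
/- Let e0, s0, K_M be positive reals with e0 ≤ s0, and define h⁺(p) = ½(e0+K_M+s0−p) + ½√((e0+K_M+s0−p)² − 4e0(s0−p)) and θ(c) = c − h⁺(s0 − c) for 0 ≤ c ≤ e0. Then θ is strictly increasing on [0, e0], θ(c) < 0 for all c in [0, e0], and θ(e0) = −½(K_M + √(4e0·K_M + K_M²)). In particular, for every c in [0, e0], c − h⁺(s0 − c) ≤ −½(K_M + √(4e0·K_M + K_M²)). -/
/-- properties of θ(c) = c − h⁺(s0 − c) on [0, e0], where h⁺ is the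
nonphysical branch of the c-nullcline. -/
theorem theta_properties (e0 s0 KM : ℝ)
    (he0 : 0 < e0) (hs0 : 0 < s0) (hKM : 0 < KM) (hle : e0 ≤ s0) :
    let θ : ℝ → ℝ := fun c =>
      c - ((e0 + KM + s0 - (s0 - c)) / 2
        + Real.sqrt ((e0 + KM + s0 - (s0 - c)) ^ 2 - 4 * e0 * (s0 - (s0 - c))) / 2)
    StrictMonoOn θ (Set.Icc (0 : ℝ) e0) ∧
    (∀ c ∈ Set.Icc (0 : ℝ) e0, θ c < 0) ∧
    θ e0 = -(KM + Real.sqrt (4 * e0 * KM + KM ^ 2)) / 2 ∧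
    (∀ c ∈ Set.Icc (0 : ℝ) e0, θ c ≤ -(KM + Real.sqrt (4 * e0 * KM + KM ^ 2)) / 2) := by
  intro θ
  have hθ : ∀ c : ℝ, θ c
      = (c - e0 - KM - Real.sqrt ((c + KM - e0) ^ 2 + 4 * e0 * KM)) / 2 := by
    intro c
    show c - ((e0 + KM + s0 - (s0 - c)) / 2
        + Real.sqrt ((e0 + KM + s0 - (s0 - c)) ^ 2 - 4 * e0 * (s0 - (s0 - c))) / 2) = _
    rw [show (e0 + KM + s0 - (s0 - c)) ^ 2 - 4 * e0 * (s0 - (s0 - c))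
        = (c + KM - e0) ^ 2 + 4 * e0 * KM by ring]
    ring
  have hDpos : ∀ c : ℝ, 0 < (c + KM - e0) ^ 2 + 4 * e0 * KM := by
    intro c; positivity
  have hs : ∀ c : ℝ, Real.sqrt ((c + KM - e0) ^ 2 + 4 * e0 * KM) > c + KM - e0 ∧
      Real.sqrt ((c + KM - e0) ^ 2 + 4 * e0 * KM) > 0 := by
    intro c
    have h0 := Real.sqrt_nonneg ((c + KM - e0) ^ 2 + 4 * e0 * KM)
    have h1 := Real.sq_sqrt (le_of_lt (hDpos c))
    constructor <;> nlinarith [sq_nonneg (Real.sqrt ((c + KM - e0) ^ 2 + 4 * e0 * KM) - (c + KM - e0)), mul_pos he0 hKM]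
  have hmono : StrictMonoOn θ (Set.Icc (0 : ℝ) e0) := by
    intro a _ b _ hab
    rw [hθ a, hθ b]
    obtain ⟨hsa, hsa0⟩ := hs a
    obtain ⟨hsb, hsb0⟩ := hs b
    have h1 := Real.sq_sqrt (le_of_lt (hDpos a))
    have h2 := Real.sq_sqrt (le_of_lt (hDpos b))
    nlinarith [mul_pos (sub_pos.2 hab)
      (by nlinarith : (0:ℝ) < Real.sqrt ((a + KM - e0) ^ 2 + 4 * e0 * KM)
        + Real.sqrt ((b + KM - e0) ^ 2 + 4 * e0 * KM) - (a + b + 2 * KM - 2 * e0)),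
      add_pos hsa0 hsb0]
  have hneg : ∀ c ∈ Set.Icc (0 : ℝ) e0, θ c < 0 := by
    intro c hc
    rw [hθ c]
    have h0 := Real.sqrt_nonneg ((c + KM - e0) ^ 2 + 4 * e0 * KM)
    have := hc.2
    linarith
  have hval : θ e0 = -(KM + Real.sqrt (4 * e0 * KM + KM ^ 2)) / 2 := by
    rw [hθ e0, show (e0 + KM - e0) ^ 2 + 4 * e0 * KM = 4 * e0 * KM + KM ^ 2 by ring]
    ring
  refine ⟨hmono, hneg, hval, ?_⟩
  intro c hc
  rw [← hval]
  exact hmono.monotoneOn hc (Set.right_mem_Icc.2 (le_of_lt he0)) hc.2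
end

section
/- Let ε, ζ, M1, M2 > 0, let g : ℝ × ℝ → ℝ, and let h0 : ℝ → ℝ be differentiable with g(x, h0(x)) = 0 for all x and |h0'(x)| ≤ M1 for all x. Suppose g satisfies the contractivity condition (g(x, y1) − g(x, y2))·(y1 − y2) ≤ −ζ·(y1 − y2)² for all x, y1, y2. Let x, y : [0,∞) → ℝ be differentiable with ε·y'(T) = g(x(T), y(T)) and |x'(T)| ≤ M2 for all T ≥ 0. Then for all T ≥ 0: |y(T) − h0(x(T))| ≤ |y(0) − h0(x(0))|·exp(−ζ·T/(2ε)) + ε·M1·M2/ζ. -/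
/-!
The squared distance `v = (y - h₀ ∘ x)²` to the critical manifold is a Lyapunov function:
contractivity of `g` pulls `y` towards `h₀ x` at rate `ζ / ε`, while the manifold itself moves
with speed at most `M₁ M₂`. Young's inequality absorbs the cross term, giving
`v' ≤ (ζ / ε) ((ε M₁ M₂ / ζ)² - v)`; Grönwall's inequality then bounds `v`, and taking square
roots halves the decay rate.
-/

open Real Set

theorem le_add_sub_mul_exp_of_deriv_le {v v' : ℝ → ℝ} {k C T : ℝ} (hT : 0 ≤ T)
    (hv : ∀ t ∈ Icc 0 T, HasDerivAt v (v' t) t)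
    (bound : ∀ t ∈ Ico 0 T, v' t ≤ k * (C - v t)) :
    v T ≤ C + (v 0 - C) * exp (-k * T) := by
  have hgronwall := le_gronwallBound_of_liminf_deriv_right_le (δ := v 0) (K := -k) (ε := k * C)
    (fun t ht => (hv t ht).continuousAt.continuousWithinAt)
    (fun t ht _ hr => (hv t (Ico_subset_Icc_self ht)).hasDerivWithinAt.liminf_right_slope_le hr)
    le_rfl (fun t ht => by linarith [bound t ht]) T ⟨hT, le_rfl⟩
  rcases eq_or_ne k 0 with rfl | hk
  · simpa [gronwallBound_K0] using hgronwall
  · rw [gronwallBound_of_K_ne_0 (neg_ne_zero.mpr hk), sub_zero] at hgronwall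
    convert hgronwall using 1
    dsimp only
    field_simp
    ring

theorem two_mul_mul_div_sub_le {ε ζ M w g d : ℝ} (hε : 0 < ε) (hζ : 0 < ζ)
    (hg : g * w ≤ -ζ * w ^ 2) (hd : |d| ≤ M) :
    2 * w * (g / ε - d) ≤ ζ / ε * ((ε * M / ζ) ^ 2 - w ^ 2) := by
  set c := ε * M / ζ
  have hM : ε * M = ζ * c := by simp only [c]; field_simp
  have hwd : -(ε * (w * d)) ≤ ζ * (|w| * c) := by
    calc -(ε * (w * d)) ≤ ε * |w * d| := by nlinarith [neg_abs_le (w * d)]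
      _ ≤ ε * (|w| * M) := by rw [abs_mul]; gcongr
      _ = ζ * (|w| * c) := by linear_combination |w| * hM
  have young : 2 * |w| * c ≤ w ^ 2 + c ^ 2 := by
    simpa [sq_abs] using two_mul_le_add_sq |w| c
  rw [div_sub' hε.ne', mul_div_assoc', div_mul_eq_mul_div, div_le_div_iff_of_pos_right hε]
  nlinarith

theorem slowly_varying_lyapunov_general (ε ζ M1 M2 : ℝ)
    (hε : 0 < ε) (hζ : 0 < ζ)
    (g : ℝ → ℝ → ℝ) (h0 : ℝ → ℝ)
    (hh0 : Differentiable ℝ h0)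
    (hzero : ∀ x : ℝ, g x (h0 x) = 0)
    (hslope : ∀ x : ℝ, |deriv h0 x| ≤ M1)
    (hcontr : ∀ x y1 y2 : ℝ, (g x y1 - g x y2) * (y1 - y2) ≤ -ζ * (y1 - y2) ^ 2)
    (x y : ℝ → ℝ)
    (hx : Differentiable ℝ x) (hy : Differentiable ℝ y)
    (hfast : ∀ T : ℝ, 0 ≤ T → ε * deriv y T = g (x T) (y T))
    (hxspeed : ∀ T : ℝ, 0 ≤ T → |deriv x T| ≤ M2) :
    ∀ T : ℝ, 0 ≤ T →
      |y T - h0 (x T)| ≤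
        |y 0 - h0 (x 0)| * Real.exp (-ζ * T / (2 * ε)) + ε * M1 * M2 / ζ := by
  intro T hT
  have hM1 : 0 ≤ M1 := (abs_nonneg _).trans (hslope 0)
  have hM2 : 0 ≤ M2 := (abs_nonneg _).trans (hxspeed 0 le_rfl)
  set w : ℝ → ℝ := fun t => y t - h0 (x t)
  have hw : ∀ t, HasDerivAt w (deriv y t - deriv h0 (x t) * deriv x t) t := fun t =>
    (hy t).hasDerivAt.sub ((hh0 (x t)).hasDerivAt.comp t (hx t).hasDerivAt)
  have hv : ∀ t, HasDerivAt (fun t => w t ^ 2)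
      (2 * w t * (deriv y t - deriv h0 (x t) * deriv x t)) t := fun t => by
    simpa [mul_assoc] using (hw t).fun_pow 2
  have hdecay := le_add_sub_mul_exp_of_deriv_le (k := ζ / ε) (C := (ε * M1 * M2 / ζ) ^ 2) hT
      (fun t _ => hv t) fun t ht => by
    rw [eq_div_of_mul_eq hε.ne' ((mul_comm _ _).trans (hfast t ht.1)), mul_assoc ε]
    refine two_mul_mul_div_sub_le hε hζ (by simpa [hzero] using hcontr (x t) (y t) (h0 (x t))) ?_
    rw [abs_mul]
    exact mul_le_mul (hslope _) (hxspeed t ht.1) (abs_nonneg _) hM1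
  have hexp : exp (-(ζ / ε) * T) = exp (-ζ * T / (2 * ε)) ^ 2 := by
    rw [← exp_nat_mul]; congr 1; field_simp; ring
  set E := exp (-ζ * T / (2 * ε))
  set c := ε * M1 * M2 / ζ
  have hc : 0 ≤ c := by positivity
  refine abs_le_of_sq_le_sq ?_ (by positivity)
  calc w T ^ 2 ≤ c ^ 2 + (w 0 ^ 2 - c ^ 2) * E ^ 2 := hexp ▸ hdecay
    _ ≤ (|w 0| * E) ^ 2 + c ^ 2 := by
      rw [mul_pow, sq_abs]
      nlinarith [pow_pos (exp_pos _ : 0 < E) 2]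
    _ ≤ (|w 0| * E + c) ^ 2 := by nlinarith [mul_nonneg (by positivity : 0 ≤ |w 0| * E) hc]

/-- general slowly-varying Lyapunov (energy/Gronwall) lemma for a
fast–slow system in slow time. -/
theorem slowly_varying_lyapunov (ε ζ M1 M2 : ℝ)
    (hε : 0 < ε) (hζ : 0 < ζ) (hM1 : 0 < M1) (hM2 : 0 < M2)
    (g : ℝ → ℝ → ℝ) (h0 : ℝ → ℝ)
    (hh0 : Differentiable ℝ h0)
    (hzero : ∀ x : ℝ, g x (h0 x) = 0)
    (hslope : ∀ x : ℝ, |deriv h0 x| ≤ M1)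
    (hcontr : ∀ x y1 y2 : ℝ, (g x y1 - g x y2) * (y1 - y2) ≤ -ζ * (y1 - y2) ^ 2)
    (x y : ℝ → ℝ)
    (hx : Differentiable ℝ x) (hy : Differentiable ℝ y)
    (hfast : ∀ T : ℝ, 0 ≤ T → ε * deriv y T = g (x T) (y T))
    (hxspeed : ∀ T : ℝ, 0 ≤ T → |deriv x T| ≤ M2) :
    ∀ T : ℝ, 0 ≤ T →
      |y T - h0 (x T)| ≤
        |y 0 - h0 (x 0)| * Real.exp (-ζ * T / (2 * ε)) + ε * M1 * M2 / ζ :=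
  slowly_varying_lyapunov_general ε ζ M1 M2 hε hζ g h0 hh0 hzero hslope hcontr x y hx hy hfast
    hxspeed
end

section
/- Let e0, s0, K_M be positive reals and λ = ½(e0+K_M+s0) − ½√((e0+K_M+s0)² − 4e0·s0). Then e0·s0/(e0+K_M+s0) ≤ λ < e0·s0/(e0+K_M); consequently λ/s0 ≤ η/(1+η), where η = e0/K_M. -/
/-!
By Vieta, λ times the larger root μ = (b + √(b² - 4e₀s₀))/2 of c² - bc + e₀s₀, where
b = e₀ + K_M + s₀, equals e₀s₀; so λ = e₀s₀/μ and both bounds are bounds on μ. Since the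
discriminant is at most b², we get μ ≤ b; since it equals (e₀ + K_M - s₀)² + 4K_M s₀, we get
μ > e₀ + K_M. Finally η/(1+η) = e₀/(e₀ + K_M).
-/

section QuadraticRoots

variable {b p : ℝ}

theorem smaller_root_mul_larger_root (hD : 0 ≤ b ^ 2 - 4 * p) :
    (b / 2 - √(b ^ 2 - 4 * p) / 2) * (b / 2 + √(b ^ 2 - 4 * p) / 2) = p := by
  linear_combination (-1 / 4 : ℝ) * Real.sq_sqrt hD

theorem smaller_root_eq_div_larger_root (hp : 0 < p) (hD : 0 ≤ b ^ 2 - 4 * p) :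
    b / 2 - √(b ^ 2 - 4 * p) / 2 = p / (b / 2 + √(b ^ 2 - 4 * p) / 2) := by
  have hprod := smaller_root_mul_larger_root hD
  exact eq_div_of_mul_eq (right_ne_zero_of_mul (hprod ▸ hp.ne')) hprod

theorem div_le_smaller_root (hp : 0 < p) (hb : 0 < b) (hD : 0 ≤ b ^ 2 - 4 * p) :
    p / b ≤ b / 2 - √(b ^ 2 - 4 * p) / 2 := by
  have hsqrt : √(b ^ 2 - 4 * p) ≤ b := (Real.sqrt_le_left hb.le).2 (by linarith)
  rw [smaller_root_eq_div_larger_root hp hD]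
  exact div_le_div_of_nonneg_left hp.le (by positivity) (by linarith)

theorem smaller_root_lt_div_of_lt_larger_root {a : ℝ} (hp : 0 < p) (ha : 0 < a)
    (hD : 0 ≤ b ^ 2 - 4 * p) (h : a < b / 2 + √(b ^ 2 - 4 * p) / 2) :
    b / 2 - √(b ^ 2 - 4 * p) / 2 < p / a := by
  rw [smaller_root_eq_div_larger_root hp hD]
  exact div_lt_div_of_pos_left hp ha h

end QuadraticRoots

/-- two-sided bound for λ and the consequence λ/s0 ≤ η/(1+η). -/
theorem lambda_two_sided_bound (e0 s0 KM lam η : ℝ)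
    (he0 : 0 < e0) (hs0 : 0 < s0) (hKM : 0 < KM)
    (hlam : lam = (e0 + KM + s0) / 2 - Real.sqrt ((e0 + KM + s0) ^ 2 - 4 * e0 * s0) / 2)
    (hη : η = e0 / KM) :
    e0 * s0 / (e0 + KM + s0) ≤ lam ∧ lam < e0 * s0 / (e0 + KM) ∧
    lam / s0 ≤ η / (1 + η) := by
  rw [mul_assoc 4 e0 s0] at hlam
  subst hlam
  have hp : 0 < e0 * s0 := by positivity
  have hdisc : (e0 + KM + s0) ^ 2 - 4 * (e0 * s0) = (e0 + KM - s0) ^ 2 + 4 * KM * s0 := by ring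
  have hD : 0 ≤ (e0 + KM + s0) ^ 2 - 4 * (e0 * s0) := by rw [hdisc]; positivity
  have hlarger : e0 + KM < (e0 + KM + s0) / 2 + √((e0 + KM + s0) ^ 2 - 4 * (e0 * s0)) / 2 := by
    have : e0 + KM - s0 < √((e0 + KM + s0) ^ 2 - 4 * (e0 * s0)) :=
      Real.lt_sqrt_of_sq_lt (by rw [hdisc]; nlinarith)
    linarith
  have hup := smaller_root_lt_div_of_lt_larger_root hp (by positivity) hD hlarger
  refine ⟨div_le_smaller_root hp (by positivity) hD, hup, ?_⟩
  have hη' : η / (1 + η) = e0 / (e0 + KM) := by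
    rw [hη]; field_simp; ring
  rw [div_le_iff₀ hs0, hη', div_mul_eq_mul_div]
  exact hup.le
end

section
/- Let k1, k−1, k2, e0, s0 be positive reals, K_M = (k−1+k2)/k1, λ = ½(e0+K_M+s0) − ½√((e0+K_M+s0)² − 4e0·s0), ε_ = K_M/(e0 − λ), η = e0/K_M, κ = k−1/k2. Define ε_T = k2·λ/(s0·k1·√((e0+K_M+s0)² − 4e0·s0)) (the ratio of Tzafriri's fast timescale t_C* = 1/(k1√((e0+K_M+s0)²−4e0s0)) to the slow timescale t_P = s0/(k2·λ)), ε_D = (λ/s0)·(1/(1+κ))·(ε_/(1+ε_)), and ε_L = (η/(1+η))·(1/(1+κ))·(ε_/(1+ε_)). Then ε_T ≤ ε_D ≤ ε_L. -/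
set_option maxHeartbeats 1600000 in
/-- hierarchy of small parameters ε_T ≤ ε_D ≤ ε_L for the total QSSA. -/
theorem small_parameter_hierarchy (k1 km1 k2 e0 s0 KM lam ε η κ εT εD εL : ℝ)
    (hk1 : 0 < k1) (hkm1 : 0 < km1) (hk2 : 0 < k2) (he0 : 0 < e0) (hs0 : 0 < s0)
    (hKM : KM = (km1 + k2) / k1)
    (hlam : lam = (e0 + KM + s0) / 2 - Real.sqrt ((e0 + KM + s0) ^ 2 - 4 * e0 * s0) / 2)
    (hε : ε = KM / (e0 - lam)) (hη : η = e0 / KM) (hκ : κ = km1 / k2)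
    (hεT : εT = k2 * lam / (s0 * k1 * Real.sqrt ((e0 + KM + s0) ^ 2 - 4 * e0 * s0)))
    (hεD : εD = (lam / s0) * (1 / (1 + κ)) * (ε / (1 + ε)))
    (hεL : εL = (η / (1 + η)) * (1 / (1 + κ)) * (ε / (1 + ε))) :
    εT ≤ εD ∧ εD ≤ εL := by
  have hKMpos : 0 < KM := by rw [hKM]; positivity
  have hΔpos : 0 < (e0 + KM + s0) ^ 2 - 4 * e0 * s0 := by nlinarith [sq_nonneg (e0 + KM - s0)]
  have hσnn : 0 ≤ Real.sqrt ((e0 + KM + s0) ^ 2 - 4 * e0 * s0) := Real.sqrt_nonneg _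
  have hσsq : (Real.sqrt ((e0 + KM + s0) ^ 2 - 4 * e0 * s0)) ^ 2
      = (e0 + KM + s0) ^ 2 - 4 * e0 * s0 := Real.sq_sqrt hΔpos.le
  have hσpos : 0 < Real.sqrt ((e0 + KM + s0) ^ 2 - 4 * e0 * s0) := Real.sqrt_pos.mpr hΔpos
  generalize hσdef : Real.sqrt ((e0 + KM + s0) ^ 2 - 4 * e0 * s0) = σ
    at hlam hεT hσnn hσsq hσpos
  have h1 : e0 + KM - s0 < σ := by nlinarith
  have h2 : s0 + KM - e0 < σ := by nlinarith
  have hσltS : σ < e0 + KM + s0 := by nlinarith [mul_pos he0 hs0]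
  have hlam_pos : 0 < lam := by rw [hlam]; linarith
  have hlam_lt_s0 : lam < s0 := by rw [hlam]; linarith
  have hlam_lt_e0 : lam < e0 := by rw [hlam]; linarith
  have hσeq : σ = e0 + KM + s0 - 2 * lam := by rw [hlam]; ring
  have hquad : lam ^ 2 - (e0 + KM + s0) * lam + e0 * s0 = 0 := by
    have h := hσsq
    rw [hσeq] at h
    linear_combination h / 4
  have hden1 : 0 < e0 - lam := by linarith
  have hden2 : 0 < e0 - lam + KM := by linarith
  have hKM' : k1 * KM = km1 + k2 := by rw [hKM]; field_simp
  have h1ε : 1 + ε = (e0 - lam + KM) / (e0 - lam) := by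
    rw [hε, add_div, div_self hden1.ne']
  have hA : ε / (1 + ε) = KM / (e0 - lam + KM) := by
    rw [h1ε, hε, div_div_div_cancel_right₀ hden1.ne']
  have h1κ : 1 + κ = (km1 + k2) / k2 := by
    rw [hκ, add_div, div_self hk2.ne', add_comm]
  have hB : 1 / (1 + κ) = k2 / (k1 * KM) := by
    rw [h1κ, one_div_div, hKM']
  have hεD' : εD = (k2 / (k1 * (e0 - lam + KM))) * (lam / s0) := by
    rw [hεD, hA, hB]; field_simp
  have h1η : 1 + η = (KM + e0) / KM := by
    rw [hη, add_div, div_self hKMpos.ne']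
  have hεL' : εL = (k2 / (k1 * (e0 - lam + KM))) * (e0 / (e0 + KM)) := by
    rw [hεL, hA, hB, h1η, hη, div_div_div_cancel_right₀ hKMpos.ne']
    field_simp
    ring
  constructor
  · rw [hεT, hεD', div_mul_div_comm]
    have hle : k1 * (e0 - lam + KM) * s0 ≤ s0 * k1 * σ := by
      have hle' : e0 - lam + KM ≤ σ := by rw [hσeq]; linarith
      nlinarith [mul_pos hs0 hk1]
    exact div_le_div_of_nonneg_left (by positivity) (by positivity) hle
  · rw [hεD', hεL']
    have hkey : lam * (e0 + KM) ≤ e0 * s0 := by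
      nlinarith [mul_nonneg hlam_pos.le (sub_nonneg.mpr hlam_lt_s0.le)]
    have h3 : lam / s0 ≤ e0 / (e0 + KM) := by
      rw [div_le_div_iff₀ hs0 (by positivity)]
      linarith
    exact mul_le_mul_of_nonneg_left h3 (by positivity)
end

section
/- Let c, p : [0,∞) → ℝ be differentiable and satisfy c' = k1(e0 − c)(s0 − c − p) − k1·K_M·c and p' = k2·c with c(0) = 0, p(0) = 0, where k1, k−1, k2, e0, s0 > 0 and K_M = (k−1+k2)/k1. Assume 0 ≤ c(t) ≤ λ and 0 ≤ p(t) ≤ s0 for all t ≥ 0, where λ = ½(e0+K_M+s0) − ½√((e0+K_M+s0)² − 4e0·s0), and let h⁻(p) = ½(e0+K_M+s0−p) − ½√((e0+K_M+s0−p)² − 4e0(s0−p)) and ε_ = K_M/(e0 − λ). Then for all t ≥ 0: |c(t) − h⁻(p(t))| ≤ λ·(exp(−k2·t/(2ε_)) + ε_). -/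
/-!
Write `h⁻ ≤ h⁺` for the two roots in `c` of `(e0 - c)(s0 - c - p) - K_M c`, so that
`c' = k1 (c - h⁻(p)) (c - h⁺(p))`. Then `z = c - h⁻(p)` obeys the linear equation
`z' = -k1 (h⁺(p) - c) z - h⁻'(p) k2 c`. Since `h⁺ > e0 > λ ≥ c` the damping rate is at least
`k1 (e0 - λ) = (k₋₁ + k2) / ε_`, and since `-1 ≤ h⁻' ≤ 0` the forcing is at most `k2 λ`.
A Grönwall comparison for `|z|` gives `|z t| ≤ λ e^{-k1 (e0 - λ) t} + k2 λ / (k1 (e0 - λ))`,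
and both terms are below the claimed ones.
-/

open Filter Set Real Topology

-- The `if` is the right derivative of `|z|` at `x`.
theorem HasDerivAt.liminf_right_slope_abs_le {z : ℝ → ℝ} {x dz r : ℝ} (hz : HasDerivAt z dz x)
    (hr : (if z x = 0 then |dz| else SignType.sign (z x) * dz) < r) :
    ∃ᶠ y in 𝓝[>] x, (y - x)⁻¹ * (|z y| - |z x|) < r := by
  split_ifs at hr with h
  · exact hz.hasDerivWithinAt.liminf_right_slope_norm_le hr
  · simpa only [slope_def_field, div_eq_inv_mul, Function.comp_def] using
      ((hasDerivAt_abs h).comp x hz).hasDerivWithinAt.liminf_right_slope_le hr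

theorem abs_le_of_hasDerivAt_neg_mul_add {z a r : ℝ → ℝ} {K M : ℝ} (hK : 0 < K)
    (hz : ∀ t, 0 ≤ t → HasDerivAt z (-(a t * z t) + r t) t)
    (ha : ∀ t, 0 ≤ t → K ≤ a t) (hr : ∀ t, 0 ≤ t → |r t| ≤ M) {t : ℝ} (ht : 0 ≤ t) :
    |z t| ≤ |z 0| * exp (-(K * t)) + M / K := by
  set dz := fun s => -(a s * z s) + r s
  have hM : 0 ≤ M := (abs_nonneg _).trans (hr 0 le_rfl)
  have bound : ∀ s, 0 ≤ s →
      (if z s = 0 then |dz s| else SignType.sign (z s) * dz s) ≤ -K * |z s| + M := by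
    intro s hs
    obtain ⟨hr₁, hr₂⟩ := abs_le.1 (hr s hs)
    have has := ha s hs
    split_ifs with h
    · simpa [dz, h] using hr s hs
    · rcases lt_or_gt_of_ne h with hneg | hpos
      · simp only [dz, sign_neg hneg, abs_of_neg hneg, SignType.coe_neg_one]
        nlinarith
      · simp only [dz, sign_pos hpos, abs_of_pos hpos, SignType.coe_one]
        nlinarith
  have := le_gronwallBound_of_liminf_deriv_right_le (f := fun s => |z s|) (a := 0) (b := t)
    (fun s hs => (hz s hs.1).continuousAt.abs.continuousWithinAt)
    (fun s hs _ hr => (hz s hs.1).liminf_right_slope_abs_le hr) le_rfl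
    (fun s hs => bound s hs.1) t ⟨ht, le_rfl⟩
  rw [sub_zero, gronwallBound_of_K_ne_0 (neg_ne_zero.2 hK.ne')] at this
  have hexp : 0 < exp (-K * t) := exp_pos _
  calc |z t| ≤ |z 0| * exp (-K * t) + M / -K * (exp (-K * t) - 1) := this
    _ ≤ |z 0| * exp (-(K * t)) + M / K := by
      rw [div_neg, neg_mul K]
      have : 0 ≤ M / K * exp (-(K * t)) := by positivity
      nlinarith

noncomputable section

def cNullclineDisc (e0 KM s0 p : ℝ) : ℝ := (e0 + KM + s0 - p) ^ 2 - 4 * e0 * (s0 - p)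

def cNullclineLower (e0 KM s0 p : ℝ) : ℝ :=
  (e0 + KM + s0 - p) / 2 - √(cNullclineDisc e0 KM s0 p) / 2

def cNullclineUpper (e0 KM s0 p : ℝ) : ℝ :=
  (e0 + KM + s0 - p) / 2 + √(cNullclineDisc e0 KM s0 p) / 2

end

section Nullcline

variable {e0 KM s0 p : ℝ}

theorem cNullclineDisc_eq : cNullclineDisc e0 KM s0 p =
    (KM + (s0 - p) - e0) ^ 2 + 4 * e0 * KM := by
  unfold cNullclineDisc; ring

theorem abs_lt_sqrt_cNullclineDisc (he0 : 0 < e0) (hKM : 0 < KM) :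
    |KM + (s0 - p) - e0| < √(cNullclineDisc e0 KM s0 p) := by
  rw [← sqrt_sq_eq_abs, cNullclineDisc_eq]
  exact sqrt_lt_sqrt (sq_nonneg _) (by linarith [mul_pos he0 hKM])

theorem cNullclineDisc_pos (he0 : 0 < e0) (hKM : 0 < KM) : 0 < cNullclineDisc e0 KM s0 p := by
  rw [cNullclineDisc_eq]; positivity

theorem cNullclineLower_lt (he0 : 0 < e0) (hKM : 0 < KM) : cNullclineLower e0 KM s0 p < e0 := by
  have := (abs_lt.1 (abs_lt_sqrt_cNullclineDisc (s0 := s0) (p := p) he0 hKM)).2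
  unfold cNullclineLower; linarith

theorem lt_cNullclineUpper (he0 : 0 < e0) (hKM : 0 < KM) : e0 < cNullclineUpper e0 KM s0 p := by
  have := (abs_lt.1 (abs_lt_sqrt_cNullclineDisc (s0 := s0) (p := p) he0 hKM)).1
  unfold cNullclineUpper; linarith

theorem sqrt_cNullclineDisc_eq :
    √(cNullclineDisc e0 KM s0 p) = cNullclineUpper e0 KM s0 p - cNullclineLower e0 KM s0 p := by
  unfold cNullclineUpper cNullclineLower; ring

theorem cNullcline_factor (he0 : 0 < e0) (hKM : 0 < KM) (c : ℝ) :
    (e0 - c) * (s0 - c - p) - KM * c =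
      (c - cNullclineLower e0 KM s0 p) * (c - cNullclineUpper e0 KM s0 p) := by
  have := sq_sqrt (cNullclineDisc_pos (s0 := s0) (p := p) he0 hKM).le
  unfold cNullclineLower cNullclineUpper
  unfold cNullclineDisc at this ⊢
  linear_combination (1/4 : ℝ) * this

theorem hasDerivAt_cNullclineLower (he0 : 0 < e0) (hKM : 0 < KM) :
    HasDerivAt (cNullclineLower e0 KM s0)
      (-((e0 - cNullclineLower e0 KM s0 p) / √(cNullclineDisc e0 KM s0 p))) p := by
  have hD := cNullclineDisc_pos (s0 := s0) (p := p) he0 hKM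
  have hS : HasDerivAt (fun q => e0 + KM + s0 - q) (-1) p := (hasDerivAt_id' p).const_sub _
  have hs : HasDerivAt (fun q => s0 - q) (-1) p := (hasDerivAt_id' p).const_sub _
  have hDisc : HasDerivAt (cNullclineDisc e0 KM s0) (-2 * (e0 + KM + s0 - p) + 4 * e0) p :=
    ((hS.pow 2).sub (hs.const_mul (4 * e0))).congr_deriv (by ring)
  refine ((hS.div_const 2).sub ((hDisc.sqrt hD.ne').div_const 2)).congr_deriv ?_
  unfold cNullclineLower
  field_simp
  ring

theorem sub_cNullclineLower_div_sqrt_mem_Icc (he0 : 0 < e0) (hKM : 0 < KM) :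
    (e0 - cNullclineLower e0 KM s0 p) / √(cNullclineDisc e0 KM s0 p) ∈ Icc (0 : ℝ) 1 := by
  have hL := cNullclineLower_lt (s0 := s0) (p := p) he0 hKM
  have hU := lt_cNullclineUpper (s0 := s0) (p := p) he0 hKM
  rw [sqrt_cNullclineDisc_eq]
  exact ⟨div_nonneg (by linarith) (by linarith), (div_le_one (by linarith)).2 (by linarith)⟩

end Nullcline

theorem abs_sub_cNullclineLower_le {k1 k2 e0 s0 KM lam : ℝ} {c p : ℝ → ℝ}
    (hk1 : 0 < k1) (hk2 : 0 ≤ k2) (he0 : 0 < e0) (hKM : 0 < KM) (hlam : lam < e0)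
    (hc : ∀ t, 0 ≤ t → HasDerivAt c (k1 * (e0 - c t) * (s0 - c t - p t) - k1 * KM * c t) t)
    (hp : ∀ t, 0 ≤ t → HasDerivAt p (k2 * c t) t)
    (hcb : ∀ t, 0 ≤ t → 0 ≤ c t ∧ c t ≤ lam) {t : ℝ} (ht : 0 ≤ t) :
    |c t - cNullclineLower e0 KM s0 (p t)| ≤
      |c 0 - cNullclineLower e0 KM s0 (p 0)| * exp (-(k1 * (e0 - lam) * t)) +
        k2 * lam / (k1 * (e0 - lam)) := by
  set L := fun t => cNullclineLower e0 KM s0 (p t)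
  set U := fun t => cNullclineUpper e0 KM s0 (p t)
  set σ := fun t => (e0 - L t) / √(cNullclineDisc e0 KM s0 (p t))
  refine abs_le_of_hasDerivAt_neg_mul_add (z := fun t => c t - L t)
    (a := fun t => k1 * (U t - c t)) (r := fun t => σ t * (k2 * c t))
    (mul_pos hk1 (sub_pos.2 hlam)) (fun t ht => ?_) (fun t ht => ?_) (fun t ht => ?_) ht
  · refine ((hc t ht).sub ((hasDerivAt_cNullclineLower he0 hKM).comp t (hp t ht))).congr_deriv ?_
    linear_combination k1 * cNullcline_factor (s0 := s0) (p := p t) he0 hKM (c t)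
  · have hU := lt_cNullclineUpper (s0 := s0) (p := p t) he0 hKM
    have hc₁ := (hcb t ht).2
    exact mul_le_mul_of_nonneg_left (by linarith) hk1.le
  · obtain ⟨hσ₀, hσ₁⟩ := sub_cNullclineLower_div_sqrt_mem_Icc (s0 := s0) (p := p t) he0 hKM
    obtain ⟨hc₀, hc₁⟩ := hcb t ht
    rw [abs_of_nonneg (by positivity)]
    calc σ t * (k2 * c t) ≤ 1 * (k2 * lam) := by gcongr
      _ = k2 * lam := one_mul _

theorem tQSSA_dimensionless_bound_general (k1 km1 k2 e0 s0 KM lam ε : ℝ)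
    (hk1 : 0 < k1) (hkm1 : 0 < km1) (hk2 : 0 < k2) (he0 : 0 < e0)
    (hKM : KM = (km1 + k2) / k1)
    (hlam : lam = (e0 + KM + s0) / 2 - Real.sqrt ((e0 + KM + s0) ^ 2 - 4 * e0 * s0) / 2)
    (hε : ε = KM / (e0 - lam))
    (c p : ℝ → ℝ)
    (hc : ∀ t : ℝ, 0 ≤ t →
      HasDerivAt c (k1 * (e0 - c t) * (s0 - c t - p t) - k1 * KM * c t) t)
    (hp : ∀ t : ℝ, 0 ≤ t → HasDerivAt p (k2 * c t) t)
    (hc0 : c 0 = 0) (hp0 : p 0 = 0)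
    (hcb : ∀ t : ℝ, 0 ≤ t → 0 ≤ c t ∧ c t ≤ lam) :
    ∀ t : ℝ, 0 ≤ t →
      |c t - ((e0 + KM + s0 - p t) / 2
          - Real.sqrt ((e0 + KM + s0 - p t) ^ 2 - 4 * e0 * (s0 - p t)) / 2)| ≤
        lam * (Real.exp (-(k2 * t) / (2 * ε)) + ε) := by
  intro t ht
  have hKM0 : 0 < KM := hKM ▸ by positivity
  have hlam_eq : lam = cNullclineLower e0 KM s0 0 := by
    simp only [hlam, cNullclineLower, cNullclineDisc, sub_zero]
  have hlam_lt : lam < e0 := hlam_eq ▸ cNullclineLower_lt he0 hKM0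
  have hlam_nonneg : 0 ≤ lam := (hcb 0 le_rfl).1.trans (hcb 0 le_rfl).2
  have hε_pos : 0 < ε := hε ▸ div_pos hKM0 (sub_pos.2 hlam_lt)
  have hrate : k1 * (e0 - lam) = (km1 + k2) / ε := by
    rw [hε, hKM]; field_simp [(sub_pos.2 hlam_lt).ne']
  have hbound := abs_sub_cNullclineLower_le hk1 hk2.le he0 hKM0 hlam_lt hc hp hcb ht
  rw [hc0, hp0, ← hlam_eq, zero_sub, abs_neg, abs_of_nonneg hlam_nonneg, hrate] at hbound
  refine hbound.trans ?_
  have hexp : exp (-((km1 + k2) / ε * t)) ≤ exp (-(k2 * t) / (2 * ε)) := by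
    rw [exp_le_exp, neg_div, neg_le_neg_iff, div_mul_eq_mul_div,
      div_le_div_iff₀ (by positivity) hε_pos]
    nlinarith [mul_nonneg (mul_nonneg hkm1.le ht) hε_pos.le,
      mul_nonneg (mul_nonneg hk2.le ht) hε_pos.le]
  have hslow : k2 * lam / ((km1 + k2) / ε) ≤ lam * ε := by
    rw [div_div_eq_mul_div, div_le_iff₀ (by positivity)]
    nlinarith [mul_nonneg hlam_nonneg hε_pos.le]
  nlinarith [mul_le_mul_of_nonneg_left hexp hlam_nonneg]

/-- dimensionless corollary of the enslavement bound, in terms of the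
reverse-QSSA small parameter ε_ = K_M/(e0 − λ). -/
theorem tQSSA_dimensionless_bound (k1 km1 k2 e0 s0 KM lam ε : ℝ)
    (hk1 : 0 < k1) (hkm1 : 0 < km1) (hk2 : 0 < k2) (he0 : 0 < e0) (hs0 : 0 < s0)
    (hKM : KM = (km1 + k2) / k1)
    (hlam : lam = (e0 + KM + s0) / 2 - Real.sqrt ((e0 + KM + s0) ^ 2 - 4 * e0 * s0) / 2)
    (hε : ε = KM / (e0 - lam))
    (c p : ℝ → ℝ)
    (hc : ∀ t : ℝ, 0 ≤ t →
      HasDerivAt c (k1 * (e0 - c t) * (s0 - c t - p t) - k1 * KM * c t) t)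
    (hp : ∀ t : ℝ, 0 ≤ t → HasDerivAt p (k2 * c t) t)
    (hc0 : c 0 = 0) (hp0 : p 0 = 0)
    (hcb : ∀ t : ℝ, 0 ≤ t → 0 ≤ c t ∧ c t ≤ lam)
    (hpb : ∀ t : ℝ, 0 ≤ t → 0 ≤ p t ∧ p t ≤ s0) :
    ∀ t : ℝ, 0 ≤ t →
      |c t - ((e0 + KM + s0 - p t) / 2
          - Real.sqrt ((e0 + KM + s0 - p t) ^ 2 - 4 * e0 * (s0 - p t)) / 2)| ≤
        lam * (Real.exp (-(k2 * t) / (2 * ε)) + ε) :=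
  tQSSA_dimensionless_bound_general k1 km1 k2 e0 s0 KM lam ε hk1 hkm1 hk2 he0 hKM hlam hε c p hc hp
    hc0 hp0 hcb
end

section
/- Let c, p : [0,∞) → ℝ be differentiable and satisfy c' = k1(e0 − c)(s0 − c − p) − k1·K_M·c and p' = k2·c with c(0) = 0, p(0) = 0, where k1, k−1, k2, e0, s0 > 0 and K_M = (k−1+k2)/k1. Assume 0 ≤ c(t) ≤ λ and 0 ≤ p(t) ≤ s0 for all t ≥ 0, where λ = ½(e0+K_M+s0) − ½√((e0+K_M+s0)² − 4e0·s0). Then with E_T(t) = c(t) − e0(s0 − p(t))/(e0 + K_M + s0 − p(t)) and ν = k2/(k−1+k2), for all t ≥ 0: |E_T(t)| ≤ |E_T(0)|·exp(−k1(K_M + e0)t/2) + λ·(λ/(e0+K_M) + ν·(e0/(e0+K_M))·(K_M/(e0+K_M))). -/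
/-!
Write `E` for the tQSSA error. Along the flow it obeys the linear equation
`E' = -k1 (e0 + KM + s0 - p) E + b` with a forcing `0 ≤ b ≤ B := k1 λ² + k2 e0 λ / (e0 + KM)`,
and the damping rate is at least `a = k1 (e0 + KM)` because `p ≤ s0`. Young's inequality turns
this into `(E²)' ≤ -a E² + B² / a`, so Grönwall gives `E² ≤ E(0)² e^{-a t} + (B / a)²`, and taking
square roots yields the bound; `B / a` is the constant of the statement since `ν KM = k2 / k1`.
-/

open Real

lemma abs_le_add_of_sq_le_sq_add_sq {x y z : ℝ} (hy : 0 ≤ y) (hz : 0 ≤ z)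
    (h : x ^ 2 ≤ y ^ 2 + z ^ 2) : |x| ≤ y + z :=
  abs_le_of_sq_le_sq (h.trans (by nlinarith [mul_nonneg hy hz])) (add_nonneg hy hz)

lemma two_mul_mul_neg_mul_add_le {a α β B : ℝ} (ha : 0 < a) (hα : a ≤ α) (hβ : |β| ≤ B)
    (x : ℝ) : 2 * x * (-α * x + β) ≤ -a * x ^ 2 + B ^ 2 / a := by
  have hxβ : x * β ≤ |x| * B :=
    calc x * β ≤ |x * β| := le_abs_self _
      _ ≤ |x| * B := by rw [abs_mul]; gcongr
  have young : 2 * (|x| * B) ≤ a * x ^ 2 + B ^ 2 / a := by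
    rw [← sq_abs x, ← sub_nonneg]
    have : a * |x| ^ 2 + B ^ 2 / a - 2 * (|x| * B) = (a * |x| - B) ^ 2 / a := by
      field_simp
      ring
    rw [this]
    positivity
  nlinarith [mul_le_mul_of_nonneg_right hα (sq_nonneg x)]

section LinearComparison

variable {E α β : ℝ → ℝ} {a B : ℝ}

theorem sq_le_of_hasDerivAt_linear (ha : 0 < a)
    (hE : ∀ t, 0 ≤ t → HasDerivAt E (-α t * E t + β t) t)
    (hα : ∀ t, 0 ≤ t → a ≤ α t) (hβ : ∀ t, 0 ≤ t → |β t| ≤ B) {t : ℝ} (ht : 0 ≤ t) :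
    E t ^ 2 ≤ E 0 ^ 2 * exp (-(a * t)) + (B / a) ^ 2 := by
  have hE2 : ∀ s, 0 ≤ s → HasDerivAt (fun s => E s ^ 2) (2 * E s * (-α s * E s + β s)) s :=
    fun s hs => ((hE s hs).pow 2).congr_deriv (by push_cast; ring)
  have gronwall := le_gronwallBound_of_liminf_deriv_right_le (δ := E 0 ^ 2) (K := -a)
    (ε := B ^ 2 / a) (a := 0) (b := t)
    (fun s hs => (hE2 s hs.1).continuousAt.continuousWithinAt)
    (fun s hs _ hr => (hE2 s hs.1).hasDerivWithinAt.liminf_right_slope_le hr) le_rfl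
    (fun s hs => by simpa using two_mul_mul_neg_mul_add_le ha (hα s hs.1) (hβ s hs.1) (E s))
    t ⟨ht, le_rfl⟩
  rw [sub_zero, gronwallBound_of_K_ne_0 (neg_ne_zero.2 ha.ne')] at gronwall
  have hexp : 0 ≤ exp (-a * t) := (exp_pos _).le
  calc E t ^ 2 ≤ _ := gronwall
    _ = E 0 ^ 2 * exp (-(a * t)) + (B / a) ^ 2 * (1 - exp (-a * t)) := by
      rw [neg_mul]; field_simp; ring
    _ ≤ E 0 ^ 2 * exp (-(a * t)) + (B / a) ^ 2 := by nlinarith [sq_nonneg (B / a)]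

theorem abs_le_of_hasDerivAt_linear (ha : 0 < a)
    (hE : ∀ t, 0 ≤ t → HasDerivAt E (-α t * E t + β t) t)
    (hα : ∀ t, 0 ≤ t → a ≤ α t) (hβ : ∀ t, 0 ≤ t → |β t| ≤ B) {t : ℝ} (ht : 0 ≤ t) :
    |E t| ≤ |E 0| * exp (-(a * t) / 2) + B / a := by
  have hB : 0 ≤ B := (abs_nonneg _).trans (hβ 0 le_rfl)
  refine abs_le_add_of_sq_le_sq_add_sq (by positivity) (by positivity) ?_
  rw [mul_pow, sq_abs, ← exp_nat_mul]
  convert sq_le_of_hasDerivAt_linear ha hE hα hβ ht using 4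
  ring

end LinearComparison

section TotalQSSA

variable {k1 k2 e0 s0 KM : ℝ}

theorem hasDerivAt_tQSSA_error {c p : ℝ → ℝ} {t : ℝ}
    (hc : HasDerivAt c (k1 * (e0 - c t) * (s0 - c t - p t) - k1 * KM * c t) t)
    (hp : HasDerivAt p (k2 * c t) t) (hD : e0 + KM + s0 - p t ≠ 0) :
    HasDerivAt (fun s => c s - e0 * (s0 - p s) / (e0 + KM + s0 - p s))
      (-(k1 * (e0 + KM + s0 - p t)) * (c t - e0 * (s0 - p t) / (e0 + KM + s0 - p t))
        + (k1 * c t ^ 2 + k2 * c t * (e0 * (e0 + KM)) / (e0 + KM + s0 - p t) ^ 2)) t := by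
  have hquot := (((hasDerivAt_const t s0).sub hp).const_mul e0).div
    ((hasDerivAt_const t (e0 + KM + s0)).sub hp) hD
  refine (hc.sub hquot).congr_deriv ?_
  simp only [Pi.sub_apply]
  field_simp
  ring

theorem abs_tQSSA_forcing_le (hk1 : 0 ≤ k1) (hk2 : 0 ≤ k2) (he0 : 0 ≤ e0) (heKM : 0 < e0 + KM)
    {c D lam : ℝ} (hc : 0 ≤ c) (hclam : c ≤ lam) (hD : e0 + KM ≤ D) :
    |k1 * c ^ 2 + k2 * c * (e0 * (e0 + KM)) / D ^ 2| ≤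
      k1 * lam ^ 2 + k2 * e0 * lam / (e0 + KM) := by
  have hDpos : 0 < D := heKM.trans_le hD
  have hlam : 0 ≤ lam := hc.trans hclam
  rw [abs_of_nonneg (by positivity)]
  have hsq : k1 * c ^ 2 ≤ k1 * lam ^ 2 := by gcongr
  have hfrac : k2 * c * (e0 * (e0 + KM)) / D ^ 2 ≤
      k2 * lam * (e0 * (e0 + KM)) / (e0 + KM) ^ 2 := by
    gcongr
  calc _ ≤ k1 * lam ^ 2 + k2 * lam * (e0 * (e0 + KM)) / (e0 + KM) ^ 2 := add_le_add hsq hfrac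
    _ = k1 * lam ^ 2 + k2 * e0 * lam / (e0 + KM) := by field_simp

theorem tQSSA_constant_eq {km1 ν lam : ℝ} (hk1 : k1 ≠ 0) (hkk : km1 + k2 ≠ 0)
    (heKM : e0 + KM ≠ 0) (hKM : KM = (km1 + k2) / k1) (hν : ν = k2 / (km1 + k2)) :
    (k1 * lam ^ 2 + k2 * e0 * lam / (e0 + KM)) / (k1 * (e0 + KM)) =
      lam * (lam / (e0 + KM) + ν * (e0 / (e0 + KM)) * (KM / (e0 + KM))) := by
  have hk2 : k2 = ν * KM * k1 := by rw [hν, hKM]; field_simp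
  rw [hk2]
  field_simp

end TotalQSSA

theorem tQSSA_practical_bound_general (k1 km1 k2 e0 s0 KM lam ν : ℝ)
    (hk1 : 0 < k1) (hkm1 : 0 < km1) (hk2 : 0 < k2) (he0 : 0 < e0)
    (hKM : KM = (km1 + k2) / k1)
    (hν : ν = k2 / (km1 + k2))
    (c p : ℝ → ℝ)
    (hc : ∀ t : ℝ, 0 ≤ t →
      HasDerivAt c (k1 * (e0 - c t) * (s0 - c t - p t) - k1 * KM * c t) t)
    (hp : ∀ t : ℝ, 0 ≤ t → HasDerivAt p (k2 * c t) t)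
    (hcb : ∀ t : ℝ, 0 ≤ t → 0 ≤ c t ∧ c t ≤ lam)
    (hpb : ∀ t : ℝ, 0 ≤ t → 0 ≤ p t ∧ p t ≤ s0) :
    ∀ t : ℝ, 0 ≤ t →
      |c t - e0 * (s0 - p t) / (e0 + KM + s0 - p t)| ≤
        |c 0 - e0 * (s0 - p 0) / (e0 + KM + s0 - p 0)| * Real.exp (-(k1 * (KM + e0) * t) / 2)
          + lam * (lam / (e0 + KM) + ν * (e0 / (e0 + KM)) * (KM / (e0 + KM))) := by
  have heKM : 0 < e0 + KM := by rw [hKM]; positivity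
  have hD : ∀ t, 0 ≤ t → e0 + KM ≤ e0 + KM + s0 - p t := fun t ht => by linarith [(hpb t ht).2]
  intro t ht
  have bound := abs_le_of_hasDerivAt_linear (mul_pos hk1 heKM)
    (fun s hs => hasDerivAt_tQSSA_error (hc s hs) (hp s hs) (heKM.trans_le (hD s hs)).ne')
    (fun s hs => mul_le_mul_of_nonneg_left (hD s hs) hk1.le)
    (fun s hs =>
      abs_tQSSA_forcing_le hk1.le hk2.le he0.le heKM (hcb s hs).1 (hcb s hs).2 (hD s hs))
    ht
  rw [add_comm KM e0]
  rwa [tQSSA_constant_eq hk1.ne' (by positivity) heKM.ne' hKM hν] at bound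

/-- error bound for the total QSSA expression as used in practice
(the Padé-type approximant of the c-nullcline). -/
theorem tQSSA_practical_bound (k1 km1 k2 e0 s0 KM lam ν : ℝ)
    (hk1 : 0 < k1) (hkm1 : 0 < km1) (hk2 : 0 < k2) (he0 : 0 < e0) (hs0 : 0 < s0)
    (hKM : KM = (km1 + k2) / k1)
    (hlam : lam = (e0 + KM + s0) / 2 - Real.sqrt ((e0 + KM + s0) ^ 2 - 4 * e0 * s0) / 2)
    (hν : ν = k2 / (km1 + k2))
    (c p : ℝ → ℝ)
    (hc : ∀ t : ℝ, 0 ≤ t →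
      HasDerivAt c (k1 * (e0 - c t) * (s0 - c t - p t) - k1 * KM * c t) t)
    (hp : ∀ t : ℝ, 0 ≤ t → HasDerivAt p (k2 * c t) t)
    (hc0 : c 0 = 0) (hp0 : p 0 = 0)
    (hcb : ∀ t : ℝ, 0 ≤ t → 0 ≤ c t ∧ c t ≤ lam)
    (hpb : ∀ t : ℝ, 0 ≤ t → 0 ≤ p t ∧ p t ≤ s0) :
    ∀ t : ℝ, 0 ≤ t →
      |c t - e0 * (s0 - p t) / (e0 + KM + s0 - p t)| ≤
        |c 0 - e0 * (s0 - p 0) / (e0 + KM + s0 - p 0)| * Real.exp (-(k1 * (KM + e0) * t) / 2)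
          + lam * (lam / (e0 + KM) + ν * (e0 / (e0 + KM)) * (KM / (e0 + KM))) :=
  tQSSA_practical_bound_general k1 km1 k2 e0 s0 KM lam ν hk1 hkm1 hk2 he0 hKM hν c p hc hp hcb hpb
end

section
/- Let c, p : [0,∞) → ℝ be continuously differentiable and satisfy c' = k1(e0 − c)(s0 − c − p) − k1·K_M·c and p' = k2·c with c(0) = 0, p(0) = 0, where k1, k−1, k2, e0, s0 > 0 and K_M = (k−1+k2)/k1, and let λ = ½(e0+K_M+s0) − ½√((e0+K_M+s0)² − 4e0·s0). Then the region R = {(p,c) : 0 ≤ c ≤ λ, 0 ≤ p, c + p ≤ s0} is positively invariant: for all t ≥ 0, 0 ≤ c(t) ≤ λ, 0 ≤ p(t), and c(t) + p(t) ≤ s0. In particular sup_{t≥0} c(t) ≤ λ. -/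
/-! The region is invariant by continuous induction. If the solution stays in it on `[0, T]`,
then there the substrate `s0 - c - p` and the gap `lam - c` satisfy linear differential
inequalities `u' + K u ≥ 0` (for the gap because `lam` is a root of
`x ^ 2 - (e0 + KM + s0) x + e0 s0`), so both are still positive at `T`. The lower faces cannot
be crossed either: on `c = 0` we have `c' = k1 e0 (s0 - p) > 0`, and `p' = k2 c ≥ 0` as long as
`c ≥ 0`. Hence the solution stays in the region a little beyond `T`. -/

open Set Filter Topology Real

section Comparison

variable {f f' : ℝ → ℝ} {K a b : ℝ}

theorem monotoneOn_exp_mul_of_hasDerivAt (hf : ∀ t ∈ Icc a b, HasDerivAt f (f' t) t)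
    (hf' : ∀ t ∈ Icc a b, 0 ≤ f' t + K * f t) :
    MonotoneOn (fun t => exp (K * t) * f t) (Icc a b) := by
  have hF : ∀ t ∈ Icc a b, HasDerivAt (fun s => exp (K * s) * f s)
      (exp (K * t) * (f' t + K * f t)) t := fun t ht =>
    (((hasDerivAt_id' t).const_mul K).exp.mul (hf t ht)).congr_deriv (by ring)
  refine monotoneOn_of_deriv_nonneg (convex_Icc a b)
    (fun t ht => (hF t ht).continuousAt.continuousWithinAt) (fun t ht => ?_) (fun t ht => ?_)
  all_goals rw [interior_Icc] at ht
  · exact (hF t (Ioo_subset_Icc_self ht)).differentiableAt.differentiableWithinAt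
  · rw [(hF t (Ioo_subset_Icc_self ht)).deriv]
    exact mul_nonneg (exp_pos _).le (hf' t (Ioo_subset_Icc_self ht))

theorem nonneg_of_hasDerivAt_add_mul_nonneg (hab : a ≤ b)
    (hf : ∀ t ∈ Icc a b, HasDerivAt f (f' t) t) (hf' : ∀ t ∈ Icc a b, 0 ≤ f' t + K * f t)
    (ha : 0 ≤ f a) : 0 ≤ f b := by
  have := monotoneOn_exp_mul_of_hasDerivAt hf hf' (left_mem_Icc.2 hab) (right_mem_Icc.2 hab) hab
  exact nonneg_of_mul_nonneg_right (le_trans (by positivity) this) (exp_pos _)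

theorem pos_of_hasDerivAt_add_mul_nonneg (hab : a ≤ b)
    (hf : ∀ t ∈ Icc a b, HasDerivAt f (f' t) t) (hf' : ∀ t ∈ Icc a b, 0 ≤ f' t + K * f t)
    (ha : 0 < f a) : 0 < f b := by
  have := monotoneOn_exp_mul_of_hasDerivAt hf hf' (left_mem_Icc.2 hab) (right_mem_Icc.2 hab) hab
  exact pos_of_mul_pos_right (lt_of_lt_of_le (by positivity) this) (exp_pos _).le

theorem HasDerivAt.eventually_nhdsGT_nonneg {x y : ℝ} (hf : HasDerivAt f y x) (hx : 0 ≤ f x)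
    (hy : f x = 0 → 0 < y) : ∀ᶠ t in 𝓝[>] x, 0 ≤ f t := by
  rcases hx.lt_or_eq with hx | hx
  · exact nhdsWithin_le_nhds (hf.continuousAt.eventually_const_lt hx |>.mono fun _ => le_of_lt)
  · have hslope : ∀ᶠ t in 𝓝[>] x, 0 < slope f x t :=
      nhdsGT_le_nhdsNE x <|
        (hasDerivAt_iff_tendsto_slope.1 hf).eventually (lt_mem_nhds (hy hx.symm))
    filter_upwards [hslope, self_mem_nhdsWithin] with t ht hxt
    rw [slope_def_field, ← hx, sub_zero] at ht
    exact (div_pos_iff_of_pos_right (sub_pos.2 hxt) |>.1 ht).le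

end Comparison

theorem IsClosed.forall_mem_of_eventually_nhdsGT {E : Type*} [TopologicalSpace E] {x : ℝ → E}
    {R : Set E} {a : ℝ} (hR : IsClosed R) (hx : ContinuousOn x (Ici a)) (ha : x a ∈ R)
    (hstep : ∀ T, a ≤ T → (∀ t ∈ Icc a T, x t ∈ R) → ∀ᶠ t in 𝓝[>] T, x t ∈ R) :
    ∀ t, a ≤ t → x t ∈ R := by
  intro t ht
  have hclosed : IsClosed (x ⁻¹' R ∩ Icc a t) := by
    rw [inter_comm]
    exact (hx.mono Icc_subset_Ici_self).preimage_isClosed_of_isClosed isClosed_Icc hR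
  exact hclosed.Icc_subset_of_forall_mem_nhdsGT_of_Icc_subset ha
    (fun T hT hsub => hstep T hT.1 hsub) (right_mem_Icc.2 ht)

section SmallerRoot

variable {a b m lam : ℝ}

theorem pos_of_eq_smallerRoot (ha : 0 < a) (hb : 0 < b) (hm : 0 ≤ m)
    (hlam : lam = (a + m + b) / 2 - √((a + m + b) ^ 2 - 4 * a * b) / 2) : 0 < lam := by
  have : √((a + m + b) ^ 2 - 4 * a * b) < a + m + b :=
    (sqrt_lt' (by positivity)).2 (by nlinarith [mul_pos ha hb])
  rw [hlam]; linarith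

theorem le_of_eq_smallerRoot (ha : 0 ≤ a) (hm : 0 ≤ m)
    (hlam : lam = (a + m + b) / 2 - √((a + m + b) ^ 2 - 4 * a * b) / 2) : lam ≤ a := by
  have : |m + b - a| ≤ √((a + m + b) ^ 2 - 4 * a * b) :=
    abs_le_sqrt (by nlinarith [mul_nonneg ha hm])
  rw [hlam]; linarith [le_abs_self (m + b - a)]

theorem mul_sub_eq_of_eq_smallerRoot (ha : 0 ≤ a) (hb : 0 ≤ b) (hm : 0 ≤ m)
    (hlam : lam = (a + m + b) / 2 - √((a + m + b) ^ 2 - 4 * a * b) / 2) :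
    lam * (a + m + b - lam) = a * b := by
  have hdisc : 0 ≤ (a + m + b) ^ 2 - 4 * a * b := by
    nlinarith [sq_nonneg (a - b), mul_nonneg hm (add_nonneg ha hb)]
  rw [hlam]
  linear_combination (-1 / 4 : ℝ) * sq_sqrt hdisc

end SmallerRoot

-- Points are `(c, p)`, the reverse of the paper's `(p, c)` phase plane.
def mmRegion (lam s0 : ℝ) : Set (ℝ × ℝ) :=
  {x | 0 ≤ x.1 ∧ x.1 ≤ lam ∧ 0 ≤ x.2 ∧ x.1 + x.2 ≤ s0}

theorem isClosed_mmRegion (lam s0 : ℝ) : IsClosed (mmRegion lam s0) :=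
  (isClosed_le continuous_const continuous_fst).inter <|
    (isClosed_le continuous_fst continuous_const).inter <|
      (isClosed_le continuous_const continuous_snd).inter <|
        isClosed_le (continuous_fst.add continuous_snd) continuous_const

section MichaelisMenten

variable {k1 km1 k2 e0 s0 KM lam T : ℝ} {c p : ℝ → ℝ}

theorem complex_add_product_lt (hk1 : 0 ≤ k1) (hkm1 : 0 ≤ km1) (hs0 : 0 < s0)
    (hk1KM : k1 * KM = km1 + k2)
    (hc : ∀ t, 0 ≤ t → HasDerivAt c (k1 * (e0 - c t) * (s0 - c t - p t) - k1 * KM * c t) t)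
    (hp : ∀ t, 0 ≤ t → HasDerivAt p (k2 * c t) t) (hc0 : c 0 = 0) (hp0 : p 0 = 0)
    (hT : 0 ≤ T) (hc_nonneg : ∀ t ∈ Icc 0 T, 0 ≤ c t) (hsum : ∀ t ∈ Icc 0 T, c t + p t ≤ s0) :
    c T + p T < s0 := by
  suffices 0 < s0 - (c T + p T) by linarith
  refine pos_of_hasDerivAt_add_mul_nonneg (f := fun t => s0 - (c t + p t)) (K := k1 * e0) hT
    (fun t ht => ((hc t ht.1).add (hp t ht.1)).const_sub s0) (fun t ht => ?_)
    (by simp [hc0, hp0, hs0])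
  have hs : 0 ≤ s0 - c t - p t := by linarith [hsum t ht]
  -- the substrate `s0 - c - p` satisfies `s' + k1 e0 s = c (k1 s + km1)`
  linear_combination -c t * hk1KM + mul_nonneg (mul_nonneg hk1 (hc_nonneg t ht)) hs
    + mul_nonneg hkm1 (hc_nonneg t ht)

theorem complex_lt_smallerRoot (hk1 : 0 ≤ k1) (hlam : 0 < lam) (hlam_e0 : lam ≤ e0)
    (hroot : lam * (e0 + KM + s0 - lam) = e0 * s0)
    (hc : ∀ t, 0 ≤ t → HasDerivAt c (k1 * (e0 - c t) * (s0 - c t - p t) - k1 * KM * c t) t)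
    (hc0 : c 0 = 0) (hT : 0 ≤ T) (hR : ∀ t ∈ Icc 0 T, (c t, p t) ∈ mmRegion lam s0) :
    c T < lam := by
  suffices 0 < lam - c T by linarith
  refine pos_of_hasDerivAt_add_mul_nonneg (f := fun t => lam - c t)
    (K := k1 * (e0 + KM + s0 - lam)) hT (fun t ht => (hc t ht.1).const_sub lam)
    (fun t ht => ?_) (by simp [hc0, hlam])
  obtain ⟨hc_nonneg, hc_le, hp_nonneg, -⟩ := hR t ht
  -- since `lam` is a root, `v = lam - c` satisfies `v' + K v = k1 c (lam - c) + k1 (e0 - c) p`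
  linear_combination -k1 * hroot + mul_nonneg (mul_nonneg hk1 hc_nonneg) (sub_nonneg.2 hc_le)
    + mul_nonneg (mul_nonneg hk1 (sub_nonneg.2 (hc_le.trans hlam_e0))) hp_nonneg

theorem eventually_mem_mmRegion (hk1 : 0 < k1) (he0 : 0 < e0) (hk2 : 0 ≤ k2)
    (hc : ∀ t, 0 ≤ t → HasDerivAt c (k1 * (e0 - c t) * (s0 - c t - p t) - k1 * KM * c t) t)
    (hp : ∀ t, 0 ≤ t → HasDerivAt p (k2 * c t) t) (hT : 0 ≤ T)
    (hRT : (c T, p T) ∈ mmRegion lam s0) (hlt : c T < lam) (hsum : c T + p T < s0) :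
    ∀ᶠ t in 𝓝[>] T, (c t, p t) ∈ mmRegion lam s0 := by
  obtain ⟨hcT, -, hpT, -⟩ := hRT
  have hc_nonneg : ∀ᶠ t in 𝓝[>] T, 0 ≤ c t := by
    refine (hc T hT).eventually_nhdsGT_nonneg hcT fun h => ?_
    have : 0 < s0 - p T := by linarith
    simp only [h, sub_zero, mul_zero]
    positivity
  obtain ⟨ε, hε, hIoo⟩ := mem_nhdsGT_iff_exists_Ioo_subset.1 hc_nonneg
  have hp_nonneg : ∀ t ∈ Ioo T ε, 0 ≤ p t := fun t ht =>
    nonneg_of_hasDerivAt_add_mul_nonneg (K := 0) ht.1.le (fun s hs => hp s (hT.trans hs.1))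
      (fun s hs => by
        rcases hs.1.eq_or_lt with rfl | hs'
        · simpa using mul_nonneg hk2 hcT
        · simpa using mul_nonneg hk2 (hIoo ⟨hs', hs.2.trans_lt ht.2⟩))
      hpT
  have hcont_c := (hc T hT).continuousAt
  have hcont_sum := hcont_c.add (hp T hT).continuousAt
  filter_upwards [hc_nonneg, Ioo_mem_nhdsGT hε,
    nhdsWithin_le_nhds (hcont_c.eventually_lt_const hlt),
    nhdsWithin_le_nhds (hcont_sum.eventually_lt_const hsum)] with t h1 h2 h3 h4
  exact ⟨h1, h3.le, hp_nonneg t h2, h4.le⟩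

end MichaelisMenten

theorem positive_invariance_general (k1 km1 k2 e0 s0 KM lam : ℝ)
    (hk1 : 0 < k1) (hkm1 : 0 < km1) (hk2 : 0 < k2) (he0 : 0 < e0) (hs0 : 0 < s0)
    (hKM : KM = (km1 + k2) / k1)
    (hlam : lam = (e0 + KM + s0) / 2 - Real.sqrt ((e0 + KM + s0) ^ 2 - 4 * e0 * s0) / 2)
    (c p : ℝ → ℝ)
    (hc : ∀ t : ℝ, 0 ≤ t →
      HasDerivAt c (k1 * (e0 - c t) * (s0 - c t - p t) - k1 * KM * c t) t)
    (hp : ∀ t : ℝ, 0 ≤ t → HasDerivAt p (k2 * c t) t)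
    (hc0 : c 0 = 0) (hp0 : p 0 = 0) :
    (∀ t : ℝ, 0 ≤ t → 0 ≤ c t ∧ c t ≤ lam ∧ 0 ≤ p t ∧ c t + p t ≤ s0) ∧
    sSup (c '' Set.Ici (0 : ℝ)) ≤ lam := by
  have hKM0 : 0 ≤ KM := by rw [hKM]; positivity
  have hk1KM : k1 * KM = km1 + k2 := by rw [hKM]; field_simp
  have hlam0 : 0 < lam := pos_of_eq_smallerRoot he0 hs0 hKM0 hlam
  have hlam_e0 : lam ≤ e0 := le_of_eq_smallerRoot he0.le hKM0 hlam
  have hroot := mul_sub_eq_of_eq_smallerRoot he0.le hs0.le hKM0 hlam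
  have hmem : ∀ t, 0 ≤ t → (c t, p t) ∈ mmRegion lam s0 := by
    refine (isClosed_mmRegion lam s0).forall_mem_of_eventually_nhdsGT
      (fun t ht => ((hc t ht).continuousAt.prodMk (hp t ht).continuousAt).continuousWithinAt)
      (by simp [mmRegion, hc0, hp0, hlam0.le, hs0.le]) fun T hT hR => ?_
    refine eventually_mem_mmRegion hk1 he0 hk2.le hc hp hT (hR T ⟨hT, le_rfl⟩)
      (complex_lt_smallerRoot hk1.le hlam0 hlam_e0 hroot hc hc0 hT hR) ?_
    exact complex_add_product_lt hk1.le hkm1.le hs0 hk1KM hc hp hc0 hp0 hT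
      (fun t ht => (hR t ht).1) (fun t ht => (hR t ht).2.2.2)
  refine ⟨hmem, Real.sSup_le ?_ hlam0.le⟩
  rintro _ ⟨t, ht, rfl⟩
  exact (hmem t ht).2.1

/-- positive invariance of the region {0 ≤ c ≤ λ, 0 ≤ p, c + p ≤ s0}
for the Michaelis–Menten system in the (p,c) phase plane. -/
theorem positive_invariance (k1 km1 k2 e0 s0 KM lam : ℝ)
    (hk1 : 0 < k1) (hkm1 : 0 < km1) (hk2 : 0 < k2) (he0 : 0 < e0) (hs0 : 0 < s0)
    (hKM : KM = (km1 + k2) / k1)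
    (hlam : lam = (e0 + KM + s0) / 2 - Real.sqrt ((e0 + KM + s0) ^ 2 - 4 * e0 * s0) / 2)
    (c p : ℝ → ℝ)
    (hc : ∀ t : ℝ, 0 ≤ t →
      HasDerivAt c (k1 * (e0 - c t) * (s0 - c t - p t) - k1 * KM * c t) t)
    (hp : ∀ t : ℝ, 0 ≤ t → HasDerivAt p (k2 * c t) t)
    (hc' : Continuous (deriv c)) (hp' : Continuous (deriv p))
    (hc0 : c 0 = 0) (hp0 : p 0 = 0) :
    (∀ t : ℝ, 0 ≤ t → 0 ≤ c t ∧ c t ≤ lam ∧ 0 ≤ p t ∧ c t + p t ≤ s0) ∧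
    sSup (c '' Set.Ici (0 : ℝ)) ≤ lam :=
  positive_invariance_general k1 km1 k2 e0 s0 KM lam hk1 hkm1 hk2 he0 hs0 hKM hlam c p hc hp hc0 hp0
end
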